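/- arXiv:2208.04031 — 8 statements merged into one kernel-verified Lean document; each statement's English description precedes it below -/
import Mathlib

section
/- Let A* be a subset of a finite abelian group G* such that A* ∪ (A* + A*) = G* and the stabilizer of A* + A* is trivial. Then either A* + A* + A* = G*, or all of the following hold: 0 ∉ A*, A* = −A*, the stabilizer of A* is trivial, A* ∩ (A* + A*) = ∅, |A*| ≤ (|G*| + 1)/3, and A* + A* + A* = G* \ {0}. -/
/-!
If `g ∉ A + A + A`, then `g - A ⊆ A`, since `g - a ∈ A + A` would put `g` into `A + A + A`. So two
elements missing from `A + A + A` differ by a period of `A`, hence of `A + A`, and coincide; as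
`2g` is missing along with `g`, the only missing element is `0`. Then `A = -A`, `A` is sum-free
and `A + A = Aᶜ`.

For `3|A| ≤ |G| + 1`, iterated Dyson e-transforms of `(A, A)` give `A' ⊇ A` with stabilizer `H`
and `b ∈ A` such that `b + A' ⊆ A + A = Aᶜ` and `2|A| ≤ |A'| + |H|`. The `H`-periodic set `b + A'`
misses `A + H`. If `H = 0` this is the bound. Otherwise `A` is not `H`-periodic: some `a + h₀ ∉ A`
is a sum `a₁ + a₂`, and `(a₁ + H) \ A` together with `a₂ + ((a₁ + H) ∩ A) ⊆ (a + H) \ A` puts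
`|H|` elements of `A + H` outside `A`, whence even `3|A| ≤ |G|`.
-/

open Pointwise AddAction

namespace Finset

variable {G : Type*} [AddCommGroup G] [DecidableEq G]

theorem card_le_card_stabilizer_of_sub_mem {s t : Finset G} (hs : s.Nonempty) {b₀ : G}
    (ht : ∀ b ∈ t, b - b₀ ∈ stabilizer G s) : #t ≤ Nat.card (stabilizer G s) := by
  have hfin : (stabilizer G (s : Set G) : Set G).Finite := stabilizer_finite hs s.finite_toSet
  rw [stabilizer_coe_finset] at hfin
  calc #t = ((-b₀) +ᵥ (t : Set G)).ncard := by rw [Set.ncard_vadd_set, Set.ncard_coe_finset]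
    _ ≤ (stabilizer G s : Set G).ncard := by
      refine Set.ncard_le_ncard ?_ hfin
      rintro _ ⟨b, hb, rfl⟩
      simpa [neg_add_eq_sub] using ht b hb
    _ = Nat.card (stabilizer G s) := Nat.card_coe_set_eq _ |>.symm

theorem exists_vadd_subset_add_card_add_card_le {s t : Finset G} (hs : s.Nonempty)
    (ht : t.Nonempty) : ∃ s', s ⊆ s' ∧ ∃ b ∈ t, b +ᵥ s' ⊆ s + t ∧
      #s + #t ≤ #s' + Nat.card (stabilizer G s') := by
  induction hn : #t using Nat.strong_induction_on generalizing s t with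
  | _ n ih =>
  obtain ⟨b₀, hb₀⟩ := ht
  by_cases hper : ∀ b ∈ t, b - b₀ ∈ stabilizer G s
  · refine ⟨s, subset_rfl, b₀, hb₀, add_comm s t ▸ vadd_finset_subset_add hb₀, ?_⟩
    have := card_le_card_stabilizer_of_sub_mem hs hper
    omega
  push Not at hper
  obtain ⟨b₁, hb₁, hb₁s⟩ := hper
  obtain ⟨a₀, ha₀, ha₀s⟩ : ∃ a₀ ∈ s, (b₁ - b₀) +ᵥ a₀ ∉ s := by
    rw [mem_stabilizer_finset'] at hb₁s
    push Not at hb₁s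
    exact hb₁s
  let x := addDysonETransform (a₀ - b₀) (s, t)
  have hb₀x : b₀ ∈ x.2 := by
    simp only [x, addDysonETransform_snd, mem_inter, mem_vadd_finset]
    exact ⟨hb₀, a₀, ha₀, by simp⟩
  have hb₁x : b₁ ∉ x.2 := by
    simp only [x, addDysonETransform_snd, mem_inter, mem_vadd_finset, not_and, not_exists]
    rintro - a ha rfl
    exact ha₀s (by convert ha using 1; simp; abel)
  have hlt : #x.2 < n := hn ▸ card_lt_card ⟨inter_subset_left, fun h ↦ hb₁x (h hb₁)⟩
  obtain ⟨s', hxs', b, hb, hbs', hcard⟩ :=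
    ih _ hlt (s := x.1) (hs.mono subset_union_left) ⟨b₀, hb₀x⟩ rfl
  refine ⟨s', subset_union_left.trans hxs', b, inter_subset_left hb,
    hbs'.trans (addDysonETransform.subset _ _), ?_⟩
  have : #x.1 + #x.2 = #s + #t := addDysonETransform.card _ _
  omega

end Finset

namespace Set

variable {G : Type*} [AddCommGroup G]

theorem stabilizer_le_stabilizer_add_self (A : Set G) :
    stabilizer G A ≤ stabilizer G (A + A) := by
  intro g hg
  rw [mem_stabilizer_iff] at hg ⊢
  rw [← vadd_add_assoc, hg]

section Cover

variable {A : Set G} (hcover : A ∪ (A + A) = univ)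
include hcover

theorem sub_mem_of_notMem_add_add {g a : G} (hg : g ∉ A + A + A) (ha : a ∈ A) : g - a ∈ A :=
  (hcover ▸ mem_univ (g - a) : g - a ∈ A ∪ (A + A)).resolve_right fun h ↦
    hg (by simpa using add_mem_add h ha)

theorem eq_of_notMem_add_add (hstab : stabilizer G (A + A) = ⊥) {x y : G}
    (hx : x ∉ A + A + A) (hy : y ∉ A + A + A) : x = y := by
  have hxy : x - y ∈ stabilizer G A := by
    refine mem_stabilizer_set.2 fun b ↦ ⟨fun hb ↦ ?_, fun hb ↦ ?_⟩
    · convert sub_mem_of_notMem_add_add hcover hy (sub_mem_of_notMem_add_add hcover hx hb) using 1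
      rw [vadd_eq_add]; abel
    · convert sub_mem_of_notMem_add_add hcover hx (sub_mem_of_notMem_add_add hcover hy hb) using 1
      rw [vadd_eq_add]; abel
  have := stabilizer_le_stabilizer_add_self A hxy
  rwa [hstab, AddSubgroup.mem_bot, sub_eq_zero] at this

theorem add_add_eq_compl_zero (hstab : stabilizer G (A + A) = ⊥)
    (h3 : A + A + A ≠ univ) : A + A + A = {0}ᶜ := by
  obtain ⟨g, hg⟩ : ∃ g, g ∉ A + A + A := by simpa [eq_univ_iff_forall] using h3
  have h2g : g + g ∉ A + A + A := by
    rintro ⟨_, ⟨p, hp, q, hq, rfl⟩, c, hc, hpqc⟩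
    simp only at hpqc
    refine hg ?_
    convert add_mem_add (add_mem_add (sub_mem_of_notMem_add_add hcover hg hp)
      (sub_mem_of_notMem_add_add hcover hg hq)) (sub_mem_of_notMem_add_add hcover hg hc) using 1
    linear_combination (norm := abel) hpqc
  obtain rfl : g = 0 := by simpa using eq_of_notMem_add_add hcover hstab h2g hg
  ext x
  refine ⟨fun hx (hx0 : x = 0) ↦ hg (hx0 ▸ hx), fun hx0 ↦ ?_⟩
  by_contra hx
  exact hx0 (eq_of_notMem_add_add hcover hstab hx hg)

end Cover

theorem exists_addSubgroup_disjoint_ncard_add_le [Finite G] {A : Set G} (hA : A.Nonempty)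
    (hneg : -A = A) (hAA : A + A = Aᶜ) :
    ∃ H : AddSubgroup G, Disjoint (H : Set G) A ∧
      (A + H).ncard + 2 * A.ncard ≤ Nat.card G + Nat.card H := by
  classical
  obtain ⟨s', hAs', b, hb, hbs', hcard⟩ := Finset.exists_vadd_subset_add_card_add_card_le
    (s := A.toFinite.toFinset) (t := A.toFinite.toFinset) (by simpa) (by simpa)
  rw [Finite.toFinset_subset] at hAs'
  rw [Finite.mem_toFinset] at hb
  rw [← ncard_eq_toFinset_card A] at hcard
  set S : Set G := b +ᵥ (s' : Set G)
  have hSA : S ⊆ Aᶜ := by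
    rw [← hAA]
    simpa [S, ← Finset.coe_vadd_finset] using Finset.coe_subset.2 hbs'
  have hstabS : ∀ h ∈ stabilizer G s', h +ᵥ S = S := by
    intro h hh
    rw [mem_stabilizer_iff] at hh
    rw [vadd_comm, ← Finset.coe_vadd_finset, hh]
  refine ⟨stabilizer G s', disjoint_left.2 fun h hh hhA ↦ ?_, ?_⟩
  · have hnegb : -b ∈ A := by rw [← hneg]; simpa using hb
    have : h + -b ∈ s' := mem_stabilizer_finset'.1 hh (Finset.mem_coe.1 (hAs' hnegb))
    exact hSA ⟨h + -b, this, by simp⟩ hhA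
  · have hdisj : Disjoint (A + (stabilizer G s' : Set G)) S := by
      rw [disjoint_left]
      rintro _ ⟨a, ha, h, hh, rfl⟩ hS
      refine hSA ?_ ha
      rw [← hstabS (-h) (neg_mem hh)]
      exact ⟨a + h, hS, by simp⟩
    have hunion :=
      ncard_union_eq hdisj ▸ ncard_le_card (A + (stabilizer G s' : Set G) ∪ S)
    rw [ncard_vadd_set, ncard_coe_finset] at hunion
    omega

theorem ncard_add_card_le_ncard_add_addSubgroup [Finite G] {A : Set G} {H : AddSubgroup G}
    (hAA : A + A = Aᶜ) (hHA : Disjoint (H : Set G) A)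
    (hH : ¬H ≤ stabilizer G A) : A.ncard + Nat.card H ≤ (A + H).ncard := by
  obtain ⟨h₀, hh₀, hh₀A⟩ := SetLike.not_le_iff_exists.1 hH
  rw [mem_stabilizer_set' A.toFinite] at hh₀A
  push Not at hh₀A
  obtain ⟨a, ha, hx⟩ := hh₀A
  obtain ⟨a₁, ha₁, a₂, ha₂, hsum⟩ : h₀ + a ∈ A + A := by rw [hAA]; exact hx
  simp only at hsum
  set C : Set G := a +ᵥ (H : Set G)
  set C₁ : Set G := a₁ +ᵥ (H : Set G)
  have hCC₁ : Disjoint C C₁ := by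
    rw [disjoint_left]
    rintro _ ⟨h, hh, rfl⟩ ⟨h', hh', heq⟩
    have ha₂H : a₂ ∈ H := by
      have : a₂ = h₀ + h' - h := by
        simp only [vadd_eq_add] at heq
        linear_combination (norm := abel) hsum - heq
      rw [this]
      exact sub_mem (add_mem hh₀ hh') hh
    exact disjoint_left.1 hHA ha₂H ha₂
  have hshift : a₂ +ᵥ (C₁ ∩ A) ⊆ C \ A := by
    rintro _ ⟨_, ⟨⟨h, hh, rfl⟩, hpA⟩, rfl⟩
    refine ⟨⟨h₀ + h, add_mem hh₀ hh, ?_⟩, ?_⟩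
    · simp only [vadd_eq_add]
      linear_combination (norm := abel) -hsum
    · have : a₂ + (a₁ +ᵥ h) ∈ A + A := add_mem_add ha₂ hpA
      rwa [hAA] at this
  have hsub : A ∪ (C₁ \ A) ∪ (C \ A) ⊆ A + H := by
    refine union_subset (union_subset ?_ ?_) ?_
    · intro x hx
      exact ⟨x, hx, 0, zero_mem H, add_zero x⟩
    · exact sdiff_subset.trans (vadd_set_subset_add ha₁)
    · exact sdiff_subset.trans (vadd_set_subset_add ha)
  have hcard : (A ∪ (C₁ \ A) ∪ (C \ A)).ncard = A.ncard + (C₁ \ A).ncard + (C \ A).ncard := by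
    rw [ncard_union_eq, ncard_union_eq disjoint_sdiff_right]
    exact disjoint_union_left.2
      ⟨disjoint_sdiff_right, hCC₁.symm.mono sdiff_subset sdiff_subset⟩
  have hC₁ : (C₁ ∩ A).ncard + (C₁ \ A).ncard = Nat.card H := by
    rw [ncard_inter_add_ncard_sdiff_eq_ncard, ncard_vadd_set]
    exact (Nat.card_coe_set_eq (H : Set G)).symm
  have hshift_card := ncard_vadd_set a₂ (C₁ ∩ A) ▸ ncard_le_ncard hshift
  have := ncard_le_ncard hsub
  omega

theorem three_mul_ncard_le_card_add_one [Finite G] {A : Set G} (hneg : -A = A)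
    (hAA : A + A = Aᶜ) (hstab : stabilizer G A = ⊥) :
    3 * A.ncard ≤ Nat.card G + 1 := by
  rcases A.eq_empty_or_nonempty with rfl | hA
  · simp
  obtain ⟨H, hHA, hcard⟩ := exists_addSubgroup_disjoint_ncard_add_le hA hneg hAA
  by_cases hH : H ≤ stabilizer G A
  · rw [hstab, le_bot_iff] at hH
    subst hH
    simp only [AddSubgroup.coe_bot, add_singleton, add_zero, image_id', AddSubgroup.card_bot]
      at hcard
    omega
  · have := ncard_add_card_le_ncard_add_addSubgroup hAA hHA hH
    omega

end Set

theorem stmt5 (G : Type*) [AddCommGroup G] [Fintype G] (A : Set G)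
    (hcover : A ∪ (A + A) = Set.univ)
    (hstab : AddAction.stabilizer G (A + A) = ⊥) :
    A + A + A = Set.univ ∨
      ((0 : G) ∉ A ∧ A = -A ∧ AddAction.stabilizer G A = ⊥ ∧
        A ∩ (A + A) = ∅ ∧ (A.ncard : ℝ) ≤ (Fintype.card G + 1) / 3 ∧
        A + A + A = {(0 : G)}ᶜ) := by
  refine or_iff_not_imp_left.2 fun h3 ↦ ?_
  have h3A := Set.add_add_eq_compl_zero hcover hstab h3
  have h0 : (0 : G) ∉ A + A + A := by simp [h3A]
  have hneg : -A = A := by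
    ext a
    constructor <;> intro ha <;> simpa using Set.sub_mem_of_notMem_add_add hcover h0 ha
  have hdisj : A ∩ (A + A) = ∅ := by
    refine Set.eq_empty_of_forall_notMem fun a ⟨ha, haa⟩ ↦ h0 ?_
    have : -a ∈ A := hneg ▸ Set.neg_mem_neg.2 ha
    simpa using Set.add_mem_add haa this
  have hAA : A + A = Aᶜ :=
    eq_compl_iff_isCompl.2 (IsCompl.of_eq (inf_comm A _ ▸ hdisj) (sup_comm A _ ▸ hcover))
  have hstabA : AddAction.stabilizer G A = ⊥ :=
    le_bot_iff.1 (hstab ▸ Set.stabilizer_le_stabilizer_add_self A)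
  have h0A : (0 : G) ∉ A := fun h ↦
    Set.eq_empty_iff_forall_notMem.1 hdisj 0 ⟨h, by simpa using Set.add_mem_add h h⟩
  refine ⟨h0A, hneg.symm, hstabA, hdisj, ?_, h3A⟩
  have := Set.three_mul_ncard_le_card_add_one hneg hAA hstabA
  rw [Nat.card_eq_fintype_card] at this
  rw [le_div_iff₀ (by norm_num)]
  exact_mod_cast (by omega : A.ncard * 3 ≤ Fintype.card G + 1)
end

section
/- Let A* be a subset of a finite abelian group G* with |G*| > 2 such that A* ∪ (A* + A*) = G* and the stabilizer of A* + A* is trivial. Then A* + A* + A* + A* = G*. -/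
open Pointwise

theorem stmt6 (G : Type*) [AddCommGroup G] [Fintype G] (A : Set G)
    (hG : Fintype.card G > 2)
    (hcover : A ∪ (A + A) = Set.univ)
    (hstab : AddAction.stabilizer G (A + A) = ⊥) :
    A + A + A + A = Set.univ := by
  classical
  have hGne : Nonempty G := Fintype.card_pos_iff.mp (by omega)
  by_contra h
  have hne : (A + A + A + A)ᶜ.Nonempty := by
    rw [Set.nonempty_compl]; exact h
  obtain ⟨g, hg⟩ := hne
  rw [Set.mem_compl_iff, add_assoc] at hg
  -- g ∉ (A+A) + (A+A)
  have hA : A.Nonempty := by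
    obtain ⟨x, hx⟩ := (Set.univ_nonempty : (Set.univ : Set G).Nonempty)
    have hx' : x ∈ A ∪ (A + A) := hcover ▸ Set.mem_univ x
    rcases hx' with h1 | h1
    · exact ⟨x, h1⟩
    · obtain ⟨a, ha, b, hb, rfl⟩ := h1; exact ⟨a, ha⟩
  -- Step A : g - B ⊆ A
  have stepA : ∀ b ∈ A + A, g - b ∈ A := by
    intro b hb
    have hx' : g - b ∈ A ∪ (A + A) := hcover ▸ Set.mem_univ _
    rcases hx' with h1 | h1
    · exact h1
    · exfalso
      have := Set.add_mem_add h1 hb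
      rw [sub_add_cancel] at this
      exact hg this
  -- Step B : g - A ⊆ B
  have stepB : ∀ a ∈ A, g - a ∈ A + A := by
    intro a ha
    have hx' : g - a ∈ A ∪ (A + A) := hcover ▸ Set.mem_univ _
    rcases hx' with h1 | h1
    · exfalso
      have hgB : g ∈ A + A := by
        have := Set.add_mem_add ha h1
        rwa [add_sub_cancel] at this
      have h0 : (0 : G) ∈ A := by
        have := stepA g hgB
        rwa [sub_self] at this
      have h00 : (0 : G) + 0 ∈ A + A := Set.add_mem_add h0 h0
      have := Set.add_mem_add hgB h00
      rw [add_zero, add_zero] at this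
      exact hg this
    · exact h1
  -- key relation: x + y = 2g - e for some e in B
  have key : ∀ x ∈ A + A, ∀ y ∈ A + A, ∃ e ∈ A + A, x + y = g + g - e := by
    intro x hx y hy
    refine ⟨(g - x) + (g - y), Set.add_mem_add (stepA x hx) (stepA y hy), ?_⟩
    abel
  have incl : ∀ x ∈ A + A, ∀ y ∈ A + A, ∀ c ∈ A + A, (x - y) + c ∈ A + A := by
    intro x hx y hy c hc
    obtain ⟨d, hd, hxc⟩ := key x hx c hc
    obtain ⟨e, he, hde⟩ := key d hd y hy
    have h2' : e = g + g - (d + y) := by rw [hde]; abel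
    have h1' : d = g + g - (x + c) := by rw [hxc]; abel
    have h3 : x - y + c = e := by rw [h2', h1']; abel
    rw [h3]; exact he
  have hsing : ∀ x ∈ A + A, ∀ y ∈ A + A, x = y := by
    intro x hx y hy
    have hmem : x - y ∈ AddAction.stabilizer G (A + A) := by
      rw [AddAction.mem_stabilizer_iff]
      apply Set.Subset.antisymm
      · rintro c ⟨c', hc', rfl⟩
        simpa [vadd_eq_add] using incl x hx y hy c' hc'
      · intro c hc
        refine ⟨(y - x) + c, incl y hy x hx c hc, ?_⟩
        simp [vadd_eq_add]
        abel
    rw [hstab, AddSubgroup.mem_bot, sub_eq_zero] at hmem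
    exact hmem
  obtain ⟨a0, ha0⟩ := hA
  have hb0 : a0 + a0 ∈ A + A := Set.add_mem_add ha0 ha0
  set b0 := a0 + a0 with hb0def
  -- A ⊆ {g - b0}
  have hAsub : A ⊆ {g - b0} := by
    intro a ha
    have := hsing (g - a) (stepB a ha) b0 hb0
    have : a = g - b0 := by
      rw [← this]; abel
    simpa using this
  have hBsub : A + A ⊆ {b0} := by
    intro x hx
    simpa using hsing x hx b0 hb0
  have hsub : (Set.univ : Set G) ⊆ {g - b0, b0} := by
    rw [← hcover]
    intro x hx
    rcases hx with h1 | h1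
    · exact Or.inl (hAsub h1)
    · exact Or.inr (hBsub h1)
  have hcard : (Set.univ : Set G).ncard ≤ 2 := by
    calc (Set.univ : Set G).ncard ≤ ({g - b0, b0} : Set G).ncard :=
          Set.ncard_le_ncard hsub (Set.toFinite _)
      _ ≤ 2 := by
          apply le_trans (Set.ncard_insert_le _ _)
          simp
  rw [Set.ncard_univ, Nat.card_eq_fintype_card] at hcard
  omega
end

section
/- Let A* be a subset of a finite abelian group G* such that A* ∪ (A* + A*) = G*, the stabilizer of A* + A* is trivial, and A* + A* + A* ≠ G*. Then G* \ (A* + A* + A*) consists of exactly one element g₀, and g₀ = 0. -/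
open Pointwise

private lemma img_eq_self {G : Type*} [Fintype G] (f : G → G) (hf : Function.Injective f)
    (S : Set G) (h : f '' S ⊆ S) : f '' S = S :=
  Set.eq_of_subset_of_ncard_le h
    (by rw [Set.ncard_image_of_injective _ hf]) (Set.toFinite S)

theorem stmt7 (G : Type*) [AddCommGroup G] [Fintype G] (A : Set G)
    (hcover : A ∪ (A + A) = Set.univ)
    (hstab : AddAction.stabilizer G (A + A) = ⊥)
    (hne : A + A + A ≠ Set.univ) :
    (A + A + A)ᶜ = {(0 : G)} := by
  have key : ∀ g : G, g ∉ A + A + A → g = 0 := by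
    intro g hg
    have hA : ∀ a ∈ A, g - a ∈ A := by
      intro a ha
      have hmem : g - a ∈ A ∪ (A + A) := by rw [hcover]; trivial
      rcases hmem with h | h
      · exact h
      · exact absurd (show g ∈ A + A + A by
          have := Set.add_mem_add h ha
          rwa [sub_add_cancel] at this) hg
    have hB : ∀ b ∈ A + A, g - b ∈ A + A := by
      intro b hb
      have hmem : g - b ∈ A ∪ (A + A) := by rw [hcover]; trivial
      rcases hmem with h | h
      · exact absurd (show g ∈ A + A + A by
          have := Set.add_mem_add hb h
          rwa [add_sub_cancel] at this) hg
      · exact h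
    have hBe : (fun x => g - x) '' (A + A) = A + A := by
      apply img_eq_self _ sub_right_injective
      rintro _ ⟨b, hb, rfl⟩
      exact hB b hb
    have hsub : (fun x => g + x) '' (A + A) ⊆ A + A := by
      rintro _ ⟨b, hb, rfl⟩
      rw [← hBe] at hb
      obtain ⟨b', hb', rfl⟩ := hb
      obtain ⟨a1, ha1, a2, ha2, rfl⟩ := hb'
      show g + (g - (a1 + a2)) ∈ A + A
      have heq : g + (g - (a1 + a2)) = (g - a1) + (g - a2) := by abel
      rw [heq]
      exact Set.add_mem_add (hA a1 ha1) (hA a2 ha2)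
    have hBe2 : (fun x => g + x) '' (A + A) = A + A :=
      img_eq_self _ (add_right_injective g) _ hsub
    have hgstab : g ∈ AddAction.stabilizer G (A + A) := by
      rw [AddAction.mem_stabilizer_iff, ← Set.image_vadd]
      simp only [vadd_eq_add]
      exact hBe2
    rw [hstab] at hgstab
    exact AddSubgroup.mem_bot.mp hgstab
  obtain ⟨g, hg⟩ := Set.ne_univ_iff_exists_notMem _ |>.mp hne
  have h0 : (0 : G) ∉ A + A + A := key g hg ▸ hg
  ext x
  simp only [Set.mem_compl_iff, Set.mem_singleton_iff]
  constructor
  · exact key x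
  · rintro rfl; exact h0
end

section
/- Let A* be a subset of a finite abelian group G* such that A* ∪ (A* + A*) = G*, the stabilizer of A* + A* is trivial, and A* + A* + A* ≠ G*. Then for any g in the complement of A* + A* + A*, one has g − A* = A*. -/
open Pointwise

theorem stmt8 (G : Type*) [AddCommGroup G] [Fintype G] (A : Set G)
    (hcover : A ∪ (A + A) = Set.univ)
    (hstab : AddAction.stabilizer G (A + A) = ⊥)
    (hne : A + A + A ≠ Set.univ) :
    ∀ g ∉ A + A + A, ({g} : Set G) - A = A := by
  intro g hg
  have key : ∀ a ∈ A, g - a ∈ A := by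
    intro a ha
    have hnot : g - a ∉ A + A := by
      intro h
      exact hg ⟨g - a, h, a, ha, sub_add_cancel g a⟩
    have : g - a ∈ A ∪ (A + A) := by rw [hcover]; trivial
    exact this.resolve_right hnot
  ext x
  constructor
  · rintro ⟨y, hy, a, ha, rfl⟩
    rw [Set.mem_singleton_iff] at hy
    subst hy
    exact key a ha
  · intro hx
    exact ⟨g, rfl, g - x, key x hx, sub_sub_cancel g x⟩
end

section
/- Let G be a finite abelian group and A ⊆ G with |A|/|G| > 2/5. Assume that A generates G, and that A has nonempty intersection with every coset of every subgroup of index 2. Then A + A + A = G. -/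
open Pointwise

theorem stmt9 (G : Type*) [AddCommGroup G] [Fintype G] (A : Set G)
    (hA : (A.ncard : ℝ) / Fintype.card G > 2/5)
    (hgen : AddSubgroup.closure A = ⊤)
    (hC1 : ∀ H : AddSubgroup G, H.index = 2 → ∀ g : G,
      (A ∩ (g +ᵥ (H : Set G))).Nonempty) :
    A + A + A = Set.univ := by
  classical
  have hn : (0 : ℕ) < Fintype.card G := Fintype.card_pos
  set n := Fintype.card G with hndef
  set B : Finset G := A.toFinset with hBdef
  have hmem : ∀ x : G, x ∈ B ↔ x ∈ A := fun x => Set.mem_toFinset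
  set m := B.card with hmdef
  have hncard : A.ncard = m := Set.ncard_eq_toFinset_card' A
  -- 5m > 2n
  have hm : 2 * n < 5 * m := by
    rw [hncard] at hA
    rw [gt_iff_lt, div_lt_div_iff₀ (by norm_num) (by exact_mod_cast hn)] at hA
    have : (2 : ℝ) * n < 5 * m := by linarith
    exact_mod_cast this
  have hm0 : 0 < m := by omega
  have hB0 : B.Nonempty := Finset.card_pos.1 hm0
  obtain ⟨a₀, ha₀⟩ := hB0
  suffices main : ∀ g : G, g ∈ A + A + A by
    exact Set.eq_univ_of_forall main
  intro g
  by_contra hg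
  -- Step 1: (B+B) and g - B are disjoint
  set p := (B + B).card with hpdef
  have hdisj : Disjoint (B + B) (B.image (fun a => g - a)) := by
    rw [Finset.disjoint_left]
    rintro x hx hx'
    obtain ⟨a, ha, rfl⟩ := Finset.mem_image.1 hx'
    obtain ⟨b, hb, c, hc, hbc⟩ := Finset.mem_add.1 hx
    apply hg
    have hgeq : b + c + a = g := by
      rw [hbc]; abel
    rw [← hgeq]
    exact Set.add_mem_add (Set.add_mem_add ((hmem b).1 hb) ((hmem c).1 hc)) ((hmem a).1 ha)
  have hpm : p + m ≤ n := by
    have himg : (B.image (fun a => g - a)).card = m := by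
      apply Finset.card_image_of_injective
      intro x y hxy
      simpa using sub_right_injective hxy
    calc p + m = ((B + B) ∪ B.image (fun a => g - a)).card := by
          rw [Finset.card_union_of_disjoint hdisj, himg]
      _ ≤ n := Finset.card_le_univ _
  have h2p3m : 2 * p < 3 * m := by omega
  -- Step 2: key intersection bound
  have key : ∀ x ∈ B - B, m < 2 * (B ∩ (x +ᵥ B)).card := by
    intro x hx
    obtain ⟨a, ha, b, hb, hab⟩ := Finset.mem_sub.1 hx
    have hcardeq : (B ∩ (x +ᵥ B)).card = ((b +ᵥ B) ∩ (a +ᵥ B)).card := by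
      have : (b +ᵥ B) ∩ (a +ᵥ B) = b +ᵥ (B ∩ (x +ᵥ B)) := by
        rw [Finset.vadd_finset_inter, vadd_vadd]
        congr 2
        rw [← hab]; abel
      rw [this, Finset.card_vadd_finset]
    have hsub : (b +ᵥ B) ∪ (a +ᵥ B) ⊆ B + B := by
      intro y hy
      rcases Finset.mem_union.1 hy with hy | hy
      · obtain ⟨z, hz, rfl⟩ := Finset.mem_vadd_finset.1 hy
        exact Finset.add_mem_add hb hz
      · obtain ⟨z, hz, rfl⟩ := Finset.mem_vadd_finset.1 hy
        exact Finset.add_mem_add ha hz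
    have hunion := Finset.card_union_add_card_inter (b +ᵥ B) (a +ᵥ B)
    rw [Finset.card_vadd_finset, Finset.card_vadd_finset] at hunion
    have hle : ((b +ᵥ B) ∪ (a +ᵥ B)).card ≤ p := Finset.card_le_card hsub
    omega
  -- Step 3: B - B is closed under negation and addition
  have hneg : ∀ x ∈ B - B, -x ∈ B - B := by
    intro x hx
    obtain ⟨a, ha, b, hb, hab⟩ := Finset.mem_sub.1 hx
    exact Finset.mem_sub.2 ⟨b, hb, a, ha, by rw [← hab]; abel⟩
  have hadd : ∀ x ∈ B - B, ∀ y ∈ B - B, x + y ∈ B - B := by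
    intro x hx y hy
    have h1 := key x hx
    have h2 := key (-y) (hneg y hy)
    have hne : ((B ∩ (x +ᵥ B)) ∩ (B ∩ ((-y) +ᵥ B))).Nonempty := by
      by_contra h
      rw [Finset.not_nonempty_iff_eq_empty, ← Finset.disjoint_iff_inter_eq_empty] at h
      have hcup := Finset.card_union_of_disjoint h
      have : ((B ∩ (x +ᵥ B)) ∪ (B ∩ ((-y) +ᵥ B))).card ≤ m := by
        apply Finset.card_le_card
        intro z hz
        rcases Finset.mem_union.1 hz with hz | hz
        · exact (Finset.mem_inter.1 hz).1
        · exact (Finset.mem_inter.1 hz).1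
      omega
    obtain ⟨z, hz⟩ := hne
    rw [Finset.mem_inter, Finset.mem_inter, Finset.mem_inter] at hz
    obtain ⟨⟨hzB, hzx⟩, -, hzy⟩ := hz
    obtain ⟨s, hs, hsx⟩ := Finset.mem_vadd_finset.1 hzx
    obtain ⟨t, ht, hty⟩ := Finset.mem_vadd_finset.1 hzy
    refine Finset.mem_sub.2 ⟨t, ht, s, hs, ?_⟩
    have hx' : x + s = z := hsx
    have hy' : -y + t = z := hty
    have heq : x + y = t - s := by
      have ht' : t = y + z := by rw [← hy']; abel
      rw [ht', ← hx']; abel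
    exact heq.symm
  -- Step 4: build the subgroup H with carrier B - B
  have hzero : (0 : G) ∈ B - B := Finset.mem_sub.2 ⟨a₀, ha₀, a₀, ha₀, sub_self _⟩
  let H : AddSubgroup G :=
    { carrier := ↑(B - B)
      zero_mem' := hzero
      add_mem' := fun {x y} hx hy => hadd x hx y hy
      neg_mem' := fun {x} hx => hneg x hx }
  have hHmem : ∀ x : G, x ∈ H ↔ x ∈ B - B := fun x => Iff.rfl
  have hHcard : Nat.card H = (B - B).card := by
    have : Nat.card (↑(B - B) : Set G) = (B - B).card := by
      rw [Nat.card_coe_set_eq, Set.ncard_coe_finset]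
    exact this
  have hHm : m ≤ (B - B).card := by
    apply Finset.card_le_card_of_injOn (fun a => a - a₀)
    · intro a ha
      exact Finset.mem_sub.2 ⟨a, ha, a₀, ha₀, rfl⟩
    · intro a _ b _ hab
      simpa using sub_left_injective hab
  have hidx : H.index * (B - B).card = n := by
    rw [← hHcard, AddSubgroup.index_mul_card, Nat.card_eq_fintype_card]
  have hk : H.index = 1 ∨ H.index = 2 := by
    have hk0 : H.index ≠ 0 := by
      intro h; rw [h] at hidx; omega
    by_contra h
    push_neg at h
    have h3 : 3 ≤ H.index := by omega
    have : 3 * (B - B).card ≤ n := by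
      calc 3 * (B - B).card ≤ H.index * (B - B).card :=
            Nat.mul_le_mul_right _ h3
        _ = n := hidx
    omega
  rcases hk with hk1 | hk2
  · -- index 1 : B - B = univ, contradict Ruzsa's triangle inequality
    have hHtop : H = ⊤ := AddSubgroup.index_eq_one.1 hk1
    have huniv : B - B = Finset.univ := by
      apply Finset.eq_univ_of_forall
      intro x
      have : x ∈ H := hHtop ▸ AddSubgroup.mem_top x
      exact this
    have hcardBB : (B - B).card = n := by rw [huniv, Finset.card_univ]
    have hruzsa := Finset.ruzsa_triangle_inequality_sub_add_add B B B
    rw [hcardBB] at hruzsa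
    -- n * m ≤ p * p, p + m ≤ n, 2n < 5m : contradiction
    have hpn : p ≤ n - m := by omega
    have hsq : p * p ≤ (n - m) * (n - m) := Nat.mul_le_mul hpn hpn
    have hnm : n * m ≤ (n - m) * (n - m) := le_trans hruzsa hsq
    have hmn : m ≤ n := by omega
    zify [hmn] at hnm
    nlinarith [hnm, hm, hmn, hn]
  · -- index 2 : contradict generation via hC1
    obtain ⟨a, haA, haH⟩ := hC1 H hk2 0
    rw [zero_vadd] at haH
    have haH' : a ∈ H := haH
    have ha₀H : a₀ ∈ H := by
      have h1 : a - a₀ ∈ H := Finset.mem_sub.2 ⟨a, (hmem a).2 haA, a₀, ha₀, rfl⟩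
      have := H.sub_mem haH' h1
      simpa using this
    have hAH : A ⊆ (H : Set G) := by
      intro x hx
      have h1 : x - a₀ ∈ H := Finset.mem_sub.2 ⟨x, (hmem x).2 hx, a₀, ha₀, rfl⟩
      have := H.add_mem h1 ha₀H
      simpa using this
    have hle : AddSubgroup.closure A ≤ H := (AddSubgroup.closure_le H).2 hAH
    rw [hgen, top_le_iff] at hle
    rw [hle] at hk2
    rw [AddSubgroup.index_top] at hk2
    omega
end

section
/- Let G be a finite abelian group and A ⊆ G with |A|/|G| > 3/8. Assume: (i) A generates G; (ii) A meets every coset of every index-2 subgroup; (iii) for every subgroup K of index exactly 5, A ∩ K ≠ ∅; (iv) for every subgroup K of index exactly 5, the set A ∪ (A + A) meets every coset of K. Then A + A + A = G. -/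
open Pointwise

private def astab {G : Type*} [AddCommGroup G] [DecidableEq G] (s : Finset G) :
    AddSubgroup G where
  carrier := {x : G | Finset.image (· + x) s = s}
  zero_mem' := by
    show Finset.image (· + 0) s = s
    simp
  add_mem' := by
    intro x y hx hy
    simp only [Set.mem_setOf_eq] at *
    have : Finset.image (· + (x + y)) s = Finset.image (· + y) (Finset.image (· + x) s) := by
      rw [Finset.image_image]; congr 1; ext z; simp [add_assoc]
    rw [this, hx, hy]
  neg_mem' := by
    intro x hx
    simp only [Set.mem_setOf_eq] at *
    conv_lhs => rw [← hx]
    rw [Finset.image_image]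
    have : ((· + -x) ∘ (· + x)) = id := by ext z; simp
    rw [this, Finset.image_id]

private lemma mem_astab_iff {G : Type*} [AddCommGroup G] [DecidableEq G] {s : Finset G}
    {x : G} : x ∈ astab s ↔ Finset.image (· + x) s = s := Iff.rfl

private lemma astab_add_mem {G : Type*} [AddCommGroup G] [DecidableEq G] {s : Finset G}
    {x : G} (hx : x ∈ astab s) {y : G} (hy : y ∈ s) : y + x ∈ s := by
  rw [mem_astab_iff] at hx
  rw [← hx]
  exact Finset.mem_image_of_mem _ hy

private lemma fiber_card {G : Type*} [AddCommGroup G] [Fintype G] [DecidableEq G]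
    (K : AddSubgroup G) [DecidableEq (G ⧸ K)] (δ : G ⧸ K) :
    (Finset.univ.filter (fun x : G => (QuotientAddGroup.mk' K x) = δ)).card = Nat.card K := by
  classical
  obtain ⟨g0, rfl⟩ := QuotientAddGroup.mk'_surjective K δ
  have : (Finset.univ.filter (fun x : G => (QuotientAddGroup.mk' K x) = QuotientAddGroup.mk' K g0))
      = Finset.image (fun κ : K => g0 + (κ : G)) Finset.univ := by
    ext x
    simp only [Finset.mem_filter, Finset.mem_univ, true_and, Finset.mem_image]
    constructor
    · intro hx
      have h1 : -g0 + x ∈ K := (QuotientAddGroup.eq (s := K)).mp hx.symm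
      exact ⟨⟨-g0 + x, h1⟩, by simp⟩
    · rintro ⟨κ, rfl⟩
      have : (QuotientAddGroup.mk' K) (κ : G) = 0 := by
        simpa using (QuotientAddGroup.eq_zero_iff (κ : G)).mpr κ.2
      rw [map_add, this, add_zero]
  rw [this, Finset.card_image_of_injective _ (fun κ κ' h => Subtype.ext (by
    simpa using add_left_cancel h)), Finset.card_univ, Nat.card_eq_fintype_card]

private lemma order5 {Q : Type*} [AddCommGroup Q] [Fintype Q] (h5 : Fintype.card Q = 5)
    {w : Q} (hw : w ≠ 0) {m : ℕ} (hm : 0 < m) (hm5 : m < 5) : m • w ≠ 0 := by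
  intro hsm
  have h1 : addOrderOf w ∣ 5 := h5 ▸ addOrderOf_dvd_card
  have h2 : addOrderOf w ∣ m := addOrderOf_dvd_of_nsmul_eq_zero hsm
  rcases (Nat.Prime.eq_one_or_self_of_dvd (by norm_num) _ h1) with h | h
  · exact hw (AddMonoid.addOrderOf_eq_one_iff.mp h)
  · rw [h] at h2
    exact absurd (Nat.le_of_dvd hm h2) (by omega)

theorem stmt10 (G : Type*) [AddCommGroup G] [Fintype G] (A : Set G)
    (hA : (A.ncard : ℝ) / Fintype.card G > 3/8)
    (hgen : AddSubgroup.closure A = ⊤)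
    (hC1 : ∀ H : AddSubgroup G, H.index = 2 → ∀ g : G,
      (A ∩ (g +ᵥ (H : Set G))).Nonempty)
    (hC2 : ∀ K : AddSubgroup G, K.index = 5 → (A ∩ (K : Set G)).Nonempty)
    (hC3 : ∀ K : AddSubgroup G, K.index = 5 → ∀ g : G,
      ((A ∪ (A + A)) ∩ (g +ᵥ (K : Set G))).Nonempty) :
    A + A + A = Set.univ := by
  classical
  by_contra hne
  obtain ⟨g, hg⟩ : ∃ g : G, g ∉ A + A + A := by
    rcases Set.ne_univ_iff_exists_notMem _ |>.mp hne with ⟨g, hg⟩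
    exact ⟨g, hg⟩
  set N := Fintype.card G with hN
  set At := A.toFinset with hAtdef
  have hmemAt : ∀ x, x ∈ At ↔ x ∈ A := by intro x; simp [hAtdef]
  set a := At.card with hadef
  have haA : 3 * N + 1 ≤ 8 * a := by
    have hN0 : (0:ℝ) < N := by exact_mod_cast Fintype.card_pos
    have h1 : (3:ℝ)/8 * N < A.ncard := by
      rw [gt_iff_lt, div_lt_div_iff₀ (by norm_num) hN0] at hA
      · nlinarith
    have h2 : A.ncard = a := by rw [hadef, hAtdef, Set.ncard_eq_toFinset_card']
    rw [h2] at h1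
    have : (3:ℝ) * N < 8 * a := by nlinarith
    have := (by exact_mod_cast this : 3 * N < 8 * a)
    omega
  have hNpos : 0 < N := Fintype.card_pos
  have hapos : 0 < a := by omega
  have hAtne : At.Nonempty := Finset.card_pos.mp hapos
  set St := At + At with hStdef
  -- the sumset misses at least a elements
  have hSbound : St.card + a ≤ N := by
    have hdisj : Disjoint At (St.image (fun s => g - s)) := by
      rw [Finset.disjoint_left]
      intro x hx hx'
      rw [Finset.mem_image] at hx'
      obtain ⟨s, hs, hxs⟩ := hx'
      rw [hStdef, Finset.mem_add] at hs
      obtain ⟨y, hy, z, hz, hyz⟩ := hs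
      apply hg
      have hxA : x ∈ A := (hmemAt x).mp hx
      have hyA : y ∈ A := (hmemAt y).mp hy
      have hzA : z ∈ A := (hmemAt z).mp hz
      have : g = x + y + z := by rw [← hyz] at hxs; rw [← hxs]; abel
      rw [this]
      exact Set.add_mem_add (Set.add_mem_add hxA hyA) hzA
    have hcard : At.card + St.card = (At ∪ St.image (fun s => g - s)).card := by
      rw [Finset.card_union_of_disjoint hdisj,
        Finset.card_image_of_injective _ sub_right_injective]
    have := Finset.card_le_univ (At ∪ St.image (fun s => g - s))
    rw [← hcard] at this
    rw [hN]; omega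
  -- the maximal pair
  set Fam : Finset G × Finset G → Prop := fun pq =>
    At ⊆ pq.1 ∧ pq.2.Nonempty ∧ pq.2 ⊆ At ∧ pq.1 + pq.2 ⊆ St ∧ 2*a ≤ pq.1.card + pq.2.card
    with hFamdef
  obtain ⟨⟨Ast, Bst⟩, hFammem, hmax⟩ :
      ∃ pq ∈ Finset.univ.filter Fam, ∀ pq' ∈ Finset.univ.filter Fam,
        pq'.1.card ≤ pq.1.card := by
    apply Finset.exists_max_image
    refine ⟨(At, At), ?_⟩
    simp only [Finset.mem_filter, Finset.mem_univ, true_and, hFamdef]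
    exact ⟨subset_rfl, hAtne, subset_rfl, subset_rfl, by omega⟩
  rw [Finset.mem_filter] at hFammem
  obtain ⟨-, hAsub, hBne, hBsubA, hsumsub, hcard2a⟩ := hFammem
  dsimp only at hmax hAsub hBne hBsubA hsumsub hcard2a
  have hmax' : ∀ P Q : Finset G, At ⊆ P → Q.Nonempty → Q ⊆ At → P + Q ⊆ St →
      2*a ≤ P.card + Q.card → P.card ≤ Ast.card := by
    intro P Q h1 h2 h3 h4 h5
    apply hmax (P, Q)
    simp only [Finset.mem_filter, Finset.mem_univ, true_and, hFamdef]
    exact ⟨h1, h2, h3, h4, h5⟩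
  -- Claim 1 : the transform property
  have claim1 : ∀ a1 ∈ Ast, ∀ b ∈ Bst, ∀ b' ∈ Bst, b' + (a1 - b) ∈ Ast := by
    intro a1 ha1 b hb b' hb'
    set e := a1 - b with hedef
    set T' := Bst.image (· + e) with hT'def
    set Q' := Bst.filter (fun x => x + e ∈ Ast) with hQ'def
    have hbe : b + e = a1 := by rw [hedef]; abel
    have hQ'b : b ∈ Q' := by
      rw [hQ'def, Finset.mem_filter, hbe]; exact ⟨hb, ha1⟩
    have hT'card : T'.card = Bst.card :=
      Finset.card_image_of_injective _ (add_left_injective e)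
    have hQ'card : Q'.card = (Ast ∩ T').card := by
      have himg : Q'.image (· + e) = Ast ∩ T' := by
        ext y
        simp only [Finset.mem_image, hQ'def, Finset.mem_filter, Finset.mem_inter, hT'def]
        constructor
        · rintro ⟨x, ⟨hx1, hx2⟩, rfl⟩
          exact ⟨hx2, x, hx1, rfl⟩
        · rintro ⟨hy, x, hx, rfl⟩
          exact ⟨x, ⟨hx, hy⟩, rfl⟩
      rw [← himg, Finset.card_image_of_injective _ (add_left_injective e)]
    have hkey : (Ast ∪ T').card + Q'.card = Ast.card + Bst.card := by
      rw [hQ'card, Finset.card_union_add_card_inter, hT'card]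
    have hsum' : (Ast ∪ T') + Q' ⊆ St := by
      intro z hz
      rw [Finset.mem_add] at hz
      obtain ⟨y, hy, q, hq, hyq⟩ := hz
      rw [hQ'def, Finset.mem_filter] at hq
      rw [Finset.mem_union] at hy
      rcases hy with hy | hy
      · exact hsumsub (by rw [← hyq]; exact Finset.add_mem_add hy hq.1)
      · rw [hT'def, Finset.mem_image] at hy
        obtain ⟨x, hx, hxy⟩ := hy
        have : z = (q + e) + x := by rw [← hyq, ← hxy]; abel
        rw [this]
        exact hsumsub (Finset.add_mem_add hq.2 hx)
    have hmaxu : (Ast ∪ T').card ≤ Ast.card := by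
      apply hmax' (Ast ∪ T') Q'
      · exact hAsub.trans Finset.subset_union_left
      · exact ⟨b, hQ'b⟩
      · exact (Finset.filter_subset _ _).trans hBsubA
      · exact hsum'
      · omega
    have hTsub : T' ⊆ Ast := by
      have h1 : Ast.card ≤ (Ast ∪ T').card := Finset.card_le_card Finset.subset_union_left
      have h2 : (Ast ∪ T').card = Ast.card := le_antisymm hmaxu h1
      have h3 : T'.card ≤ (Ast ∩ T').card := by omega
      have h4 : Ast ∩ T' = T' :=
        Finset.eq_of_subset_of_card_le Finset.inter_subset_right h3
      intro x hx
      rw [← h4] at hx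
      exact Finset.mem_of_mem_inter_left hx
    exact hTsub (Finset.mem_image_of_mem _ hb')
  set K : AddSubgroup G := astab Ast with hKdef
  obtain ⟨b0, hb0⟩ := hBne
  have hKmem : ∀ b' ∈ Bst, b' - b0 ∈ K := by
    intro b' hb'
    rw [hKdef, mem_astab_iff]
    apply Finset.eq_of_subset_of_card_le
    · intro y hy
      rw [Finset.mem_image] at hy
      obtain ⟨x, hx, hxy⟩ := hy
      have : y = b' + (x - b0) := by rw [← hxy]; abel
      rw [this]
      exact claim1 x hx b0 hb0 b' hb'
    · rw [Finset.card_image_of_injective _ (add_left_injective _)]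
  set π := QuotientAddGroup.mk' K with hπdef
  set k := Nat.card K with hkdef
  set n := K.index with hndef
  have hkpos : 0 < k := by rw [hkdef]; exact Nat.card_pos
  have hNk : N = n * k := by
    rw [hN, hndef, hkdef, ← Nat.card_eq_fintype_card, (AddSubgroup.index_mul_card K)]
  -- periodicity of Ast
  have hper : ∀ y : G, π y ∈ Ast.image π → y ∈ Ast := by
    intro y hy
    rw [Finset.mem_image] at hy
    obtain ⟨c, hc, hcy⟩ := hy
    have : -c + y ∈ K := (QuotientAddGroup.eq (s := K)).mp hcy
    have := astab_add_mem this hc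
    simpa using this
  set T := Ast.image π with hTdef
  set p := T.card with hpdef
  have hfiber : ∀ X : Finset G, ∀ δ : G ⧸ K, π ⁻¹' {δ} ∩ ↑X = ↑X ∩ π ⁻¹' {δ} := by
    intro X δ; exact Set.inter_comm _ _
  -- each fiber of Ast is a full coset
  have hAstfiber : ∀ δ ∈ T, (Finset.univ.filter (fun x : G => π x = δ)) ⊆ Ast := by
    intro δ hδ x hx
    rw [Finset.mem_filter] at hx
    apply hper
    rw [hx.2]; exact hδ
  have hfull : ∀ δ ∈ T, Ast.filter (fun x => π x = δ) = Finset.univ.filter (fun x : G => π x = δ) := by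
    intro δ hδ
    apply Finset.Subset.antisymm
    · intro x hx
      rw [Finset.mem_filter] at hx ⊢
      exact ⟨Finset.mem_univ x, hx.2⟩
    · intro x hx
      rw [Finset.mem_filter] at hx ⊢
      exact ⟨hAstfiber δ hδ (by rw [Finset.mem_filter]; exact hx), hx.2⟩
  have hAstcard : Ast.card = p * k := by
    rw [Finset.card_eq_sum_card_fiberwise (f := π) (t := T)
      (fun x hx => Finset.mem_image_of_mem π hx)]
    rw [Finset.sum_congr rfl (fun δ hδ => by rw [hfull δ hδ, fiber_card])]
    rw [Finset.sum_const, smul_eq_mul, hpdef, hkdef]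
  have hBk : Bst.card ≤ k := by
    have himg : Bst.image (· - b0) ⊆ Finset.univ.filter (fun x : G => π x = 0) := by
      intro y hy
      rw [Finset.mem_image] at hy
      obtain ⟨x, hx, hxy⟩ := hy
      rw [Finset.mem_filter]
      refine ⟨Finset.mem_univ y, ?_⟩
      rw [← hxy]
      exact (QuotientAddGroup.eq_zero_iff _).mpr (hKmem x hx)
    have := Finset.card_le_card himg
    rw [Finset.card_image_of_injective _ sub_left_injective, fiber_card] at this
    exact this
  have hAstS : Ast.card ≤ St.card := by
    have himg : Ast.image (· + b0) ⊆ St := by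
      intro y hy
      rw [Finset.mem_image] at hy
      obtain ⟨x, hx, hxy⟩ := hy
      rw [← hxy]
      exact hsumsub (Finset.add_mem_add hx hb0)
    have := Finset.card_le_card himg
    rwa [Finset.card_image_of_injective _ (add_left_injective _)] at this
  have hasub : a ≤ Ast.card := Finset.card_le_card hAsub
  have hppos : 0 < p := by
    rw [hpdef, hTdef]
    exact Finset.card_pos.mpr ((hAtne.mono hAsub).image π)
  -- arithmetic: (n,p) = (2,1) or (5,3)
  have hq1 : p * k + a ≤ n * k := by
    have : Ast.card + a ≤ N := by omega
    rw [hAstcard] at this; omega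
  have hq2 : 2 * a ≤ p * k + k := by
    rw [hAstcard] at hcard2a; omega
  have hq3 : a ≤ p * k := by rw [hAstcard] at hasub; exact hasub
  have hcancel : ∀ x y : ℕ, x * k < y * k → x < y := by
    intro x y hxy
    by_contra hc
    push_neg at hc
    exact absurd (Nat.mul_le_mul_right k hc) (not_le.mpr hxy)
  have hdichot : (n = 2 ∧ p = 1) ∨ (n = 5 ∧ p = 3) := by
    have hn8 : n < 8 := by
      have h24 : 9 * (n * k) + 3 ≤ 8 * (n * k) + 8 * k := by
        have : 3 * (n * k) + 1 ≤ 8 * a := by rw [← hNk]; exact haA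
        omega
      have : n * k < 8 * k := by omega
      exact hcancel n 8 this
    have hp5 : 8 * p < 5 * n := by
      have h1 : 8 * (p * k) < 5 * (n * k) := by
        have : 3 * (n * k) + 1 ≤ 8 * a := by rw [← hNk]; exact haA
        omega
      have h2 : (8 * p) * k < (5 * n) * k := by rw [mul_assoc, mul_assoc]; exact h1
      exact hcancel _ _ h2
    have hp3 : 3 * n < 4 * (p + 1) := by
      have h1 : 3 * (n * k) < 4 * ((p + 1) * k) := by
        have h8 : 8 * a ≤ 4 * (p * k) + 4 * k := by omega
        have : 3 * (n * k) + 1 ≤ 8 * a := by rw [← hNk]; exact haA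
        have h9 : (p+1) * k = p * k + k := by ring
        omega
      have h2 : (3 * n) * k < (4 * (p + 1)) * k := by rw [mul_assoc, mul_assoc]; exact h1
      exact hcancel _ _ h2
    have hpn : p < n := by
      have h1 : p * k < n * k := by omega
      exact hcancel _ _ h1
    interval_cases n <;> omega
  -- common: fibers of points
  rcases hdichot with ⟨hn2, hp1⟩ | ⟨hn5, hp3⟩
  · -- index 2 : A is contained in a single coset of K
    have hKidx : K.index = 2 := by rw [← hndef]; exact hn2
    obtain ⟨c, hc⟩ := Finset.card_eq_one.mp (by rw [← hpdef]; exact hp1)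
    have hcardQ2 : Fintype.card (G ⧸ K) = 2 := by
      rw [← Nat.card_eq_fintype_card, ← AddSubgroup.index_eq_card]; exact hKidx
    have : Nontrivial (G ⧸ K) := Fintype.one_lt_card_iff_nontrivial.mp (by omega)
    obtain ⟨q, hq⟩ := exists_ne c
    obtain ⟨g', hg'⟩ := QuotientAddGroup.mk'_surjective K q
    obtain ⟨x, hxA, hxcoset⟩ := hC1 K hKidx g'
    obtain ⟨κ, hκ, hκx⟩ := hxcoset
    have hπx : π x = q := by
      have hκ0 : π κ = 0 := (QuotientAddGroup.eq_zero_iff κ).mpr hκ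
      rw [← hκx]
      show π (g' + κ) = q
      rw [map_add, hg', hκ0, add_zero]
    have hxT : π x ∈ T := Finset.mem_image_of_mem π (hAsub ((hmemAt x).mpr hxA))
    rw [hc, Finset.mem_singleton, hπx] at hxT
    exact hq hxT
  · -- index 5
    have hKidx : K.index = 5 := by rw [← hndef]; exact hn5
    have hcardQ5 : Fintype.card (G ⧸ K) = 5 := by
      rw [← Nat.card_eq_fintype_card, ← AddSubgroup.index_eq_card]; exact hKidx
    have hN5 : N = 5 * k := by rw [hNk, hn5]
    set β0 := π b0 with hβ0def
    have hb0At : b0 ∈ At := hBsubA hb0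
    have hβ0im : β0 ∈ At.image π := Finset.mem_image_of_mem π hb0At
    have hβ0T : β0 ∈ T := Finset.mem_image_of_mem π (hAsub hb0At)
    set α : G ⧸ K → ℕ := fun γ => (At.filter (fun x => π x = γ)).card with hαdef
    set σ : G ⧸ K → ℕ := fun δ => (St.filter (fun x => π x = δ)).card with hσdef
    have hαsum : ∑ γ ∈ T, α γ = a :=
      (Finset.card_eq_sum_card_fiberwise (fun x hx => Finset.mem_image_of_mem π (hAsub hx))).symm
    have hαk : ∀ γ, α γ ≤ k := by
      intro γ
      have h1 : At.filter (fun x => π x = γ) ⊆ Finset.univ.filter (fun x : G => π x = γ) := by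
        intro x hx
        rw [Finset.mem_filter] at hx ⊢
        exact ⟨Finset.mem_univ x, hx.2⟩
      have := Finset.card_le_card h1
      rwa [fiber_card] at this
    set Δ : Finset (G ⧸ K) := T.image (fun t => t + β0) with hΔdef
    have hΔcard : Δ.card = 3 := by
      rw [hΔdef, Finset.card_image_of_injective _ (add_left_injective β0), ← hpdef]
      exact hp3
    have hΔfull : ∀ δ ∈ Δ, ∀ x : G, π x = δ → x ∈ St := by
      intro δ hδ x hx
      rw [hΔdef, Finset.mem_image] at hδ
      obtain ⟨t, ht, htδ⟩ := hδ
      have h1 : π (x - b0) = t := by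
        rw [map_sub, hx, ← htδ, ← hβ0def]; abel
      have h2 : x - b0 ∈ Ast := hper _ (by rw [h1]; exact ht)
      have h3 : x = (x - b0) + b0 := by abel
      rw [h3]
      exact hsumsub (Finset.add_mem_add h2 hb0)
    have hStsum : St.card = ∑ δ ∈ Finset.univ, σ δ :=
      Finset.card_eq_sum_card_fiberwise (fun x _ => Finset.mem_univ (π x))
    have hout : ∀ δ : G ⧸ K, δ ∉ Δ → σ δ + a ≤ 2 * k := by
      intro δ hδ
      have h1 : ∀ δ' ∈ Δ, σ δ' = k := by
        intro δ' hδ'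
        have heq : St.filter (fun x => π x = δ') = Finset.univ.filter (fun x : G => π x = δ') := by
          apply Finset.Subset.antisymm
          · intro x hx
            rw [Finset.mem_filter] at hx ⊢
            exact ⟨Finset.mem_univ x, hx.2⟩
          · intro x hx
            rw [Finset.mem_filter] at hx ⊢
            exact ⟨hΔfull δ' hδ' x hx.2, hx.2⟩
        rw [hσdef]
        simp only
        rw [heq, fiber_card]
      have h2 : ∑ δ' ∈ insert δ Δ, σ δ' ≤ St.card := by
        rw [hStsum]
        exact Finset.sum_le_sum_of_subset (Finset.subset_univ _)
      rw [Finset.sum_insert hδ] at h2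
      have h3 : ∑ δ' ∈ Δ, σ δ' = 3 * k := by
        rw [Finset.sum_congr rfl h1, Finset.sum_const, hΔcard, smul_eq_mul]
      omega
    have hsigma_ge : ∀ γ γ' : G ⧸ K, γ ∈ At.image π → γ' ∈ At.image π →
        α γ' ≤ σ (γ + γ') := by
      intro γ γ' hγ hγ'
      obtain ⟨x, hx, hxγ⟩ := Finset.mem_image.mp hγ
      have hsub2 : (At.filter (fun t => π t = γ')).image (fun t => x + t) ⊆
          St.filter (fun t => π t = γ + γ') := by
        intro z hz
        rw [Finset.mem_image] at hz
        obtain ⟨y, hy, hyz⟩ := hz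
        rw [Finset.mem_filter] at hy ⊢
        constructor
        · rw [← hyz]
          exact Finset.add_mem_add hx hy.1
        · rw [← hyz, map_add, hxγ, hy.2]
      have := Finset.card_le_card hsub2
      rwa [Finset.card_image_of_injective _ (add_right_injective x)] at this
    have hdiam : ∀ γ ∈ At.image π, ∀ γ' ∈ At.image π, 2*k+1 ≤ α γ' + a → γ + γ' ∈ Δ := by
      intro γ hγ γ' hγ' hheavy
      by_contra hnot
      have h1 := hout _ hnot
      have h2 := hsigma_ge γ γ' hγ hγ'
      omega
    -- basic element facts in the quotient
    have hord : ∀ d : G ⧸ K, d ≠ 0 → ∀ m : ℕ, 0 < m → m < 5 → m • d ≠ 0 :=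
      fun d hd m h1 h2 => order5 hcardQ5 hd h1 h2
    have h2s : ∀ d : G ⧸ K, (2:ℕ) • d = d + d := fun d => two_nsmul d
    have h3s : ∀ d : G ⧸ K, (3:ℕ) • d = d + d + d := by
      intro d
      rw [succ_nsmul, two_nsmul]
    have hdbl : ∀ d e : G ⧸ K, d + d = e + e → d = e := by
      intro d e h
      by_contra hne'
      refine hord (d - e) (sub_ne_zero.mpr hne') 2 (by omega) (by omega) ?_
      rw [h2s]
      rw [← sub_eq_zero] at h
      rw [← h]
      abel
    have h0im : (0 : G ⧸ K) ∈ At.image π := by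
      obtain ⟨x0, hx0A, hx0K⟩ := hC2 K hKidx
      exact Finset.mem_image.mpr ⟨x0, (hmemAt x0).mpr hx0A,
        (QuotientAddGroup.eq_zero_iff x0).mpr hx0K⟩
    have h3a : 5 * k + 1 ≤ 3 * a := by
      have : 3 * N + 1 ≤ 8 * a := haA
      rw [hN5] at this
      omega
    have hb0heavy : 2*k+1 ≤ α β0 + a := by
      have hBfiber : Bst ⊆ At.filter (fun x => π x = β0) := by
        intro b' hb'
        rw [Finset.mem_filter]
        refine ⟨hBsubA hb', ?_⟩
        have h1 := hKmem b' hb'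
        have h2 : -b' + b0 ∈ K := by
          have h3 := K.neg_mem h1
          rw [neg_sub] at h3
          rwa [neg_add_eq_sub]
        exact (QuotientAddGroup.eq (s := K)).mpr h2
      have h1 : Bst.card ≤ α β0 := Finset.card_le_card hBfiber
      have h2 : 2 * a ≤ 3 * k + Bst.card := by
        rw [hAstcard, hp3] at hcard2a
        omega
      omega
    -- final hC3 contradiction helper
    have hfinal : ∀ w : G ⧸ K, w ≠ 0 → (At.image π ⊆ {0, w}) → False := by
      intro w hw hsubA
      obtain ⟨g3, hg3⟩ := QuotientAddGroup.mk'_surjective K (w+w+w)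
      obtain ⟨x, hxmem, hxcoset⟩ := hC3 K hKidx g3
      obtain ⟨κ, hκ, hκx⟩ := hxcoset
      have hπx : π x = w+w+w := by
        have hκ0 : π κ = 0 := (QuotientAddGroup.eq_zero_iff κ).mpr hκ
        rw [← hκx]
        show π (g3 + κ) = w+w+w
        rw [map_add, hg3, hκ0, add_zero]
      have hin : π x ∈ ({0, w, w+w} : Finset (G ⧸ K)) := by
        rcases hxmem with hxA | hxAA
        · have h1 := hsubA (Finset.mem_image_of_mem π ((hmemAt x).mpr hxA))
          rw [Finset.mem_insert, Finset.mem_singleton] at h1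
          rcases h1 with h1 | h1 <;> rw [h1] <;> simp
        · obtain ⟨y, hy, z, hz, hyz⟩ := Set.mem_add.mp hxAA
          have hπy := hsubA (Finset.mem_image_of_mem π ((hmemAt y).mpr hy))
          have hπz := hsubA (Finset.mem_image_of_mem π ((hmemAt z).mpr hz))
          rw [Finset.mem_insert, Finset.mem_singleton] at hπy hπz
          have hx' : π x = π y + π z := by rw [← hyz, map_add]
          rw [hx']
          rcases hπy with h1 | h1 <;> rcases hπz with h2 | h2 <;> rw [h1, h2] <;> simp
      rw [hπx] at hin
      rw [Finset.mem_insert, Finset.mem_insert, Finset.mem_singleton] at hin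
      rcases hin with h | h | h
      · exact hord w hw 3 (by omega) (by omega) (by rw [h3s]; exact h)
      · have : w + w = 0 := by
          have := h
          have h2 : (w + w) + w = 0 + w := by rw [zero_add]; exact this
          exact add_right_cancel h2
        exact hord w hw 2 (by omega) (by omega) (by rw [h2s]; exact this)
      · have h2 : w + w = w := add_right_cancel h
        have h3 : w + w = 0 + w := by rw [zero_add]; exact h2
        exact hw (add_right_cancel h3)
    by_cases hbig : 2*k + 1 ≤ a
    · -- dense case : all pairwise sums of A-cosets are in Δ, contradict hC3
      have hall : ∀ γ ∈ At.image π, ∀ γ' ∈ At.image π, γ + γ' ∈ Δ := by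
        intro γ hγ γ' hγ'
        exact hdiam γ hγ γ' hγ' (by omega)
      have hΔne : Δ ≠ Finset.univ := by
        intro h
        rw [h, Finset.card_univ, hcardQ5] at hΔcard
        omega
      obtain ⟨δm, hδm⟩ : ∃ δm : G ⧸ K, δm ∉ Δ := by
        by_contra hcon
        push_neg at hcon
        exact hΔne (Finset.eq_univ_iff_forall.mpr hcon)
      obtain ⟨g3, hg3⟩ := QuotientAddGroup.mk'_surjective K δm
      obtain ⟨x, hxmem, hxcoset⟩ := hC3 K hKidx g3
      obtain ⟨κ, hκ, hκx⟩ := hxcoset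
      have hπx : π x = δm := by
        have hκ0 : π κ = 0 := (QuotientAddGroup.eq_zero_iff κ).mpr hκ
        rw [← hκx]
        show π (g3 + κ) = δm
        rw [map_add, hg3, hκ0, add_zero]
      apply hδm
      rw [← hπx]
      rcases hxmem with hxA | hxAA
      · have h1 : π x ∈ At.image π := Finset.mem_image_of_mem π ((hmemAt x).mpr hxA)
        have h2 := hall (π x) h1 0 h0im
        rwa [add_zero] at h2
      · obtain ⟨y, hy, z, hz, hyz⟩ := Set.mem_add.mp hxAA
        have h1 : π y ∈ At.image π := Finset.mem_image_of_mem π ((hmemAt y).mpr hy)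
        have h2 : π z ∈ At.image π := Finset.mem_image_of_mem π ((hmemAt z).mpr hz)
        have h3 := hall _ h1 _ h2
        rw [← hyz, map_add]
        exact h3
    · push_neg at hbig
      have hheavy2 : ∃ v, v ∈ At.image π ∧ v ≠ β0 ∧ 2*k+1 ≤ α v + a := by
        by_contra hcon
        push_neg at hcon
        obtain ⟨x, y, z, hxy, hxz, hyz2, hT3⟩ :=
          Finset.card_eq_three.mp (by rw [← hpdef]; exact hp3)
        have hsum3 : α x + α y + α z = a := by
          rw [← hαsum, hT3]
          rw [Finset.sum_insert (by simp [hxy, hxz]), Finset.sum_insert (by simp [hyz2]),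
            Finset.sum_singleton, add_assoc]
        have hlight : ∀ γ : G ⧸ K, γ ≠ β0 → α γ + a ≤ 2*k := by
          intro γ hγ
          by_cases hγi : γ ∈ At.image π
          · have := hcon γ hγi hγ
            omega
          · have hzero : α γ = 0 := by
              show (At.filter (fun t => π t = γ)).card = 0
              rw [Finset.card_eq_zero, Finset.filter_eq_empty_iff]
              intro t ht hteq
              exact hγi (Finset.mem_image.mpr ⟨t, ht, hteq⟩)
            omega
        have hβ0mem3 : β0 = x ∨ β0 = y ∨ β0 = z := by
          have h := hβ0T
          rw [hT3] at h
          simpa using h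
        have hkx := hαk x
        have hky := hαk y
        have hkz := hαk z
        rcases hβ0mem3 with h | h | h
        · have l1 := hlight y (fun he => hxy (he.trans h).symm)
          have l2 := hlight z (fun he => hxz (he.trans h).symm)
          omega
        · have l1 := hlight x (fun he => hxy (he.trans h))
          have l2 := hlight z (fun he => hyz2 (he.trans h).symm)
          omega
        · have l1 := hlight x (fun he => hxz (he.trans h))
          have l2 := hlight y (fun he => hyz2 (he.trans h))
          omega
      obtain ⟨v, hvim, hvne, hvheavy⟩ := hheavy2
      have huv : β0 ≠ v := fun h => hvne h.symm
      have hd1 : β0 + β0 ∈ Δ := hdiam β0 hβ0im β0 hβ0im hb0heavy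
      have hd2 : β0 + v ∈ Δ := hdiam β0 hβ0im v hvim hvheavy
      have hd3 : v + v ∈ Δ := hdiam v hvim v hvim hvheavy
      have hne12 : β0 + β0 ≠ β0 + v := fun h => huv (add_left_cancel h)
      have hne23 : β0 + v ≠ v + v := fun h => huv (add_right_cancel h)
      have hne13 : β0 + β0 ≠ v + v := fun h => huv (hdbl _ _ h)
      have hΔeq : Δ = {β0 + β0, β0 + v, v + v} := by
        symm
        apply Finset.eq_of_subset_of_card_le
        · intro t ht
          rcases Finset.mem_insert.mp ht with h | h
          · rw [h]; exact hd1
          rcases Finset.mem_insert.mp h with h' | h'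
          · rw [h']; exact hd2
          · rw [Finset.mem_singleton.mp h']; exact hd3
        · rw [hΔcard]
          rw [Finset.card_insert_of_notMem (by simp [hne12, hne13]),
            Finset.card_insert_of_notMem (by simp [hne23]), Finset.card_singleton]
      rcases eq_or_ne β0 0 with hu0 | hu0
      · -- β0 = 0 : A-cosets ⊆ {0, v}
        have hv0 : v ≠ 0 := fun h => huv (hu0.trans h.symm)
        have hΔeq' : Δ = {0, v, v + v} := by rw [hΔeq, hu0]; simp
        have hsubA2 : At.image π ⊆ {0, v} := by
          intro γ hγ
          have h1 : γ + β0 ∈ Δ := hdiam γ hγ β0 hβ0im hb0heavy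
          have h2 : γ + v ∈ Δ := hdiam γ hγ v hvim hvheavy
          rw [hu0, add_zero, hΔeq'] at h1
          rw [hΔeq'] at h2
          rw [Finset.mem_insert, Finset.mem_insert, Finset.mem_singleton] at h1
          rcases h1 with h1 | h1 | h1
          · rw [h1]; simp
          · rw [h1]; simp
          · exfalso
            rw [h1, Finset.mem_insert, Finset.mem_insert, Finset.mem_singleton] at h2
            rcases h2 with h2 | h2 | h2
            · exact hord v hv0 3 (by omega) (by omega) (by rw [h3s]; exact h2)
            · have h4 : v + v + v = 0 + v := by rw [zero_add]; exact h2
              exact hord v hv0 2 (by omega) (by omega) (by rw [h2s]; exact add_right_cancel h4)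
            · have h4 : v + v = v := add_right_cancel h2
              have h5 : v + v = 0 + v := by rw [zero_add]; exact h4
              exact hv0 (add_right_cancel h5)
        exact hfinal v hv0 hsubA2
      rcases eq_or_ne v 0 with hv0 | hv0
      · -- v = 0 : A-cosets ⊆ {0, β0}
        have hΔeq' : Δ = {β0 + β0, β0, 0} := by rw [hΔeq, hv0]; simp
        have hsubA2 : At.image π ⊆ {0, β0} := by
          intro γ hγ
          have h1 : γ + β0 ∈ Δ := hdiam γ hγ β0 hβ0im hb0heavy
          have h2 : γ + v ∈ Δ := hdiam γ hγ v hvim hvheavy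
          rw [hv0, add_zero, hΔeq'] at h2
          rw [hΔeq'] at h1
          rw [Finset.mem_insert, Finset.mem_insert, Finset.mem_singleton] at h2
          rcases h2 with h2 | h2 | h2
          · exfalso
            rw [h2, Finset.mem_insert, Finset.mem_insert, Finset.mem_singleton] at h1
            rcases h1 with h1 | h1 | h1
            · have h4 : β0 + β0 + β0 = β0 + β0 + 0 := by rw [add_zero]; exact h1
              exact hu0 (add_left_cancel h4)
            · have h4 : β0 + β0 + β0 = 0 + β0 := by rw [zero_add]; exact h1
              exact hord β0 hu0 2 (by omega) (by omega) (by rw [h2s]; exact add_right_cancel h4)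
            · exact hord β0 hu0 3 (by omega) (by omega) (by rw [h3s]; exact h1)
          · rw [h2]; simp
          · rw [h2]; simp
        exact hfinal β0 hu0 hsubA2
      · -- both nonzero : contradiction
        have h1 : (0 : G ⧸ K) + v ∈ Δ := hdiam 0 h0im v hvim hvheavy
        rw [zero_add, hΔeq, Finset.mem_insert, Finset.mem_insert, Finset.mem_singleton] at h1
        rcases h1 with h1 | h1 | h1
        · -- v = β0 + β0
          have h2 : (0 : G ⧸ K) + β0 ∈ Δ := hdiam 0 h0im β0 hβ0im hb0heavy
          rw [zero_add, hΔeq, Finset.mem_insert, Finset.mem_insert,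
            Finset.mem_singleton] at h2
          rcases h2 with h2 | h2 | h2
          · have h4 : (0 : G ⧸ K) + β0 = β0 + β0 := by rw [zero_add]; exact h2
            exact hu0 (add_right_cancel h4).symm
          · have h4 : β0 + 0 = β0 + v := by rw [add_zero]; exact h2
            exact hv0 (add_left_cancel h4).symm
          · -- β0 = v + v and v = β0 + β0
            have h5 : β0 + β0 + β0 = 0 := by
              have h6 : (β0 + β0 + β0) + β0 = 0 + β0 := by
                rw [zero_add]
                calc β0 + β0 + β0 + β0 = (β0 + β0) + (β0 + β0) := by abel
                  _ = v + v := by rw [← h1]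
                  _ = β0 := h2.symm
              exact add_right_cancel h6
            exact hord β0 hu0 3 (by omega) (by omega) (by rw [h3s]; exact h5)
        · have h4 : (0 : G ⧸ K) + v = β0 + v := by rw [zero_add]; exact h1
          exact hu0 (add_right_cancel h4).symm
        · have h4 : (0 : G ⧸ K) + v = v + v := by rw [zero_add]; exact h1
          exact hv0 (add_right_cancel h4).symm
end

section
/- Let G be a finite abelian group whose 2-Sylow subgroup is isomorphic to (ℤ/2ℤ)^r for some r ≥ 0, and let A ⊆ G with |A|/|G| > 4/11. Assume: (i) A generates G; (ii) A meets every coset of every index-2 subgroup; (iii) for every subgroup K of index ≡ 2 (mod 3) with index at most 5, A ∩ K ≠ ∅; (iv) for every subgroup K of index ≡ 2 (mod 3) with index at most 8, A ∪ (A + A) meets every coset of K. Then A + A + A = G. -/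
open Pointwise

set_option linter.unusedSectionVars false
set_option maxHeartbeats 1000000

section KneserHelpers

variable {G : Type*} [AddCommGroup G] [Fintype G]

private lemma stab_mem_of_forall {A : Set G} (x : G) (hx : ∀ a ∈ A, x + a ∈ A) :
    x ∈ AddAction.stabilizer G A := by
  rw [AddAction.mem_stabilizer_iff]
  apply Set.eq_of_subset_of_ncard_le
  · rintro _ ⟨a, ha, rfl⟩; exact hx a ha
  · rw [Set.ncard_vadd_set]
  · exact Set.toFinite A

/-- Dyson transform iteration: for finite nonempty `A, B` with `A + B ≠ G`, there is a
subgroup `H`, an element `b₀ ∈ B` and an `H`-saturated set `S` with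
`A + b₀ ⊆ S ⊆ A + B` and `|A| + |B| ≤ |S| + |H|`. -/
private lemma lemF (N : ℕ) :
    ∀ (B A : Set G), B.ncard ≤ N → A.Nonempty → B.Nonempty →
    A + B ≠ Set.univ →
    ∃ (H : AddSubgroup G) (S : Set G) (b₀ : G), b₀ ∈ B ∧
      (∀ a ∈ A, a + b₀ ∈ S) ∧ S ⊆ A + B ∧ (∀ s ∈ S, ∀ h ∈ H, s + h ∈ S) ∧
      A.ncard + B.ncard ≤ S.ncard + Nat.card H := by
  induction N with
  | zero =>
    intro B A hBN hA hB _
    exact absurd (Set.ncard_pos (Set.toFinite B) |>.mpr hB) (by omega)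
  | succ N ih =>
    intro B A hBN hA hB hABne
    by_cases hcase : ∀ a ∈ A, ∀ b ∈ B, ∀ b' ∈ B, b' + (a - b) ∈ A
    · -- stuck case: the stabilizer of A is big
      obtain ⟨b₀, hb₀⟩ := hB
      have hstab : ∀ b ∈ B, ∀ b' ∈ B, (b - b') ∈ AddAction.stabilizer G A := by
        intro b hb b' hb'
        refine stab_mem_of_forall _ (fun a ha => ?_)
        have := hcase a ha b' hb' b hb
        have e : b + (a - b') = b - b' + a := by abel
        rwa [e] at this
      refine ⟨AddAction.stabilizer G A, (· + b₀) '' A, b₀, hb₀, ?_, ?_, ?_, ?_⟩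
      · exact fun a ha => ⟨a, ha, rfl⟩
      · rintro _ ⟨a, ha, rfl⟩; exact Set.add_mem_add ha hb₀
      · rintro _ ⟨a, ha, rfl⟩ h hh
        have : h + a ∈ A := by
          rw [← AddAction.mem_stabilizer_iff.mp hh]
          exact Set.vadd_mem_vadd_set ha
        exact ⟨h + a, this, by abel⟩
      · have h1 : ((· + b₀) '' A).ncard = A.ncard :=
          Set.ncard_image_of_injective _ (add_left_injective b₀)
        have h2 : B.ncard ≤ Nat.card (AddAction.stabilizer G A) := by
          have himg : (· - b₀) '' B ⊆ (AddAction.stabilizer G A : Set G) := by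
            rintro _ ⟨b, hb, rfl⟩; exact hstab b hb b₀ hb₀
          calc B.ncard = ((· - b₀) '' B).ncard :=
                (Set.ncard_image_of_injective _ (sub_left_injective)).symm
            _ ≤ (AddAction.stabilizer G A : Set G).ncard :=
                Set.ncard_le_ncard himg (Set.toFinite _)
            _ = Nat.card (AddAction.stabilizer G A) := by
                rw [← Nat.card_coe_set_eq]; rfl
        omega
    · -- transform case
      push_neg at hcase
      obtain ⟨a, ha, b, hb, b', hb', hnot⟩ := hcase
      set x := a - b with hx
      set A₁ := A ∪ (· + x) '' B with hA₁
      set B₁ := B ∩ (· + x) ⁻¹' A with hB₁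
      have hbB₁ : b ∈ B₁ := by
        constructor
        · exact hb
        · show b + x ∈ A
          have : b + x = a := by rw [hx]; abel
          rwa [this]
      have hb'B₁ : b' ∉ B₁ := by
        intro h
        exact hnot (by have := h.2; show b' + (a - b) ∈ A; rwa [← hx])
      have hssub : B₁ ⊂ B := ⟨Set.inter_subset_left, fun h => hb'B₁ (h hb')⟩
      have hcard : B₁.ncard < B.ncard := Set.ncard_lt_ncard hssub (Set.toFinite B)
      have hcons : A₁.ncard + B₁.ncard = A.ncard + B.ncard := by
        have key : (· + x) '' B₁ = A ∩ ((· + x) '' B) := by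
          ext z; constructor
          · rintro ⟨y, ⟨hyB, hyA⟩, rfl⟩; exact ⟨hyA, ⟨y, hyB, rfl⟩⟩
          · rintro ⟨hzA, ⟨y, hyB, rfl⟩⟩; exact ⟨y, ⟨hyB, hzA⟩, rfl⟩
        have h1 : B₁.ncard = (A ∩ ((· + x) '' B)).ncard := by
          rw [← key, Set.ncard_image_of_injective _ (add_left_injective x)]
        have h2 : (A ∪ (· + x) '' B).ncard + (A ∩ ((· + x) '' B)).ncard
            = A.ncard + ((· + x) '' B).ncard :=
          Set.ncard_union_add_ncard_inter _ _ (Set.toFinite _) (Set.toFinite _)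
        have h3 : ((· + x) '' B).ncard = B.ncard :=
          Set.ncard_image_of_injective _ (add_left_injective x)
        rw [hA₁]; omega
      have hsub : A₁ + B₁ ⊆ A + B := by
        rintro _ ⟨u, hu, v, hv, rfl⟩
        rcases hu with huA | ⟨w, hwB, rfl⟩
        · exact Set.add_mem_add huA hv.1
        · have hvx : v + x ∈ A := hv.2
          have : (v + x) + w ∈ A + B := Set.add_mem_add hvx hwB
          have e : (v + x) + w = w + x + v := by abel
          rwa [e] at this
      have hne : A₁ + B₁ ≠ Set.univ := by
        intro h
        obtain ⟨g₀, hg₀⟩ := Set.ne_univ_iff_exists_notMem _ |>.mp hABne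
        exact hg₀ (hsub (h ▸ Set.mem_univ g₀))
      obtain ⟨H, S, b₀, hb₀, hS1, hS2, hS3, hS4⟩ :=
        ih B₁ A₁ (by omega) ⟨a, Or.inl ha⟩ ⟨b, hbB₁⟩ hne
      exact ⟨H, S, b₀, hssub.1 hb₀, fun a' ha' => hS1 a' (Or.inl ha'), hS2.trans hsub, hS3,
        by omega⟩

private lemma ncard_preimage_mk (H : AddSubgroup G) (T : Set (G ⧸ H)) :
    (QuotientAddGroup.mk ⁻¹' T : Set G).ncard = Nat.card H * T.ncard := by
  rw [← Nat.card_coe_set_eq, ← Nat.card_coe_set_eq,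
    Nat.card_congr (QuotientAddGroup.preimageMkEquivAddSubgroupProdSet H T), Nat.card_prod]

private lemma quot_two_torsion (H : AddSubgroup G)
    (h2part : ∀ g : G, (4 : ℕ) • g = 0 → (2 : ℕ) • g = 0) :
    ∀ q : G ⧸ H, (4 : ℕ) • q = 0 → (2 : ℕ) • q = 0 := by
  intro q h4
  obtain ⟨x, rfl⟩ := QuotientAddGroup.mk'_surjective H q
  have hrpos : 0 < addOrderOf x := addOrderOf_pos x
  have hndvd : ¬ (4 ∣ addOrderOf x) := by
    rintro ⟨s, hs⟩
    have hspos : 0 < s := by omega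
    have h4y : (4 : ℕ) • (s • x) = 0 := by
      rw [smul_smul, ← hs, addOrderOf_nsmul_eq_zero]
    have h2y := h2part _ h4y
    rw [smul_smul] at h2y
    have hdvd : addOrderOf x ∣ 2 * s := addOrderOf_dvd_iff_nsmul_eq_zero.mpr h2y
    have := Nat.le_of_dvd (by omega) hdvd
    omega
  have hd4 : addOrderOf ((QuotientAddGroup.mk' H) x) ∣ 4 :=
    addOrderOf_dvd_iff_nsmul_eq_zero.mpr h4
  have hdr : addOrderOf ((QuotientAddGroup.mk' H) x) ∣ addOrderOf x := by
    apply addOrderOf_dvd_iff_nsmul_eq_zero.mpr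
    rw [← map_nsmul, addOrderOf_nsmul_eq_zero, map_zero]
  have hd2 : addOrderOf ((QuotientAddGroup.mk' H) x) ∣ 2 := by
    have hdpos : 0 < addOrderOf ((QuotientAddGroup.mk' H) x) := addOrderOf_pos _
    have h3 : addOrderOf ((QuotientAddGroup.mk' H) x) ≠ 3 := by
      intro h; rw [h] at hd4; norm_num at hd4
    have hle : addOrderOf ((QuotientAddGroup.mk' H) x) ≤ 4 :=
      Nat.le_of_dvd (by norm_num) hd4
    have : addOrderOf ((QuotientAddGroup.mk' H) x) = 1 ∨
        addOrderOf ((QuotientAddGroup.mk' H) x) = 2 ∨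
        addOrderOf ((QuotientAddGroup.mk' H) x) = 4 := by omega
    rcases this with h | h | h
    · rw [h]; exact one_dvd _
    · rw [h]
    · rw [h] at hdr; exact absurd hdr hndvd
  exact addOrderOf_dvd_iff_nsmul_eq_zero.mp hd2

private lemma mem_zmultiples_two {Q : Type*} [AddCommGroup Q] {w z : Q}
    (hw : (2 : ℕ) • w = 0) (hz : z ∈ AddSubgroup.zmultiples w) : z = 0 ∨ z = w := by
  obtain ⟨n, rfl⟩ := AddSubgroup.mem_zmultiples_iff.mp hz
  have hww : w + w = 0 := by rw [← two_nsmul]; exact hw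
  rcases Int.even_or_odd n with ⟨c, rfl⟩ | ⟨c, rfl⟩
  · left
    calc (c + c) • w = c • w + c • w := add_zsmul w c c
    _ = c • (w + w) := (smul_add c w w).symm
    _ = 0 := by rw [hww, smul_zero]
  · right
    have h1 : (2 * c + 1) • w = (c + c) • w + (1 : ℤ) • w := by
      rw [← add_zsmul]; ring_nf
    rw [h1, one_zsmul]
    calc (c + c) • w + w = (c • w + c • w) + w := by rw [add_zsmul]
    _ = c • (w + w) + w := by rw [smul_add]
    _ = w := by rw [hww, smul_zero, zero_add]

end KneserHelpers

theorem stmt12 (G : Type*) [AddCommGroup G] [Fintype G] (A : Set G)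
    (h2part : ∀ g : G, (4 : ℕ) • g = 0 → (2 : ℕ) • g = 0)
    (hA : (A.ncard : ℝ) / Fintype.card G > 4/11)
    (hgen : AddSubgroup.closure A = ⊤)
    (hC1 : ∀ H : AddSubgroup G, H.index = 2 → ∀ g : G,
      (A ∩ (g +ᵥ (H : Set G))).Nonempty)
    (hC2 : ∀ K : AddSubgroup G, K.index % 3 = 2 → K.index ≤ 5 →
      (A ∩ (K : Set G)).Nonempty)
    (hC3 : ∀ K : AddSubgroup G, K.index % 3 = 2 → K.index ≤ 8 → ∀ g : G,
      ((A ∪ (A + A)) ∩ (g +ᵥ (K : Set G))).Nonempty) :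
    A + A + A = Set.univ := by
  by_contra hfull
  have hnpos : 0 < Fintype.card G := Fintype.card_pos
  have hk : 4 * Fintype.card G < 11 * A.ncard := by
    rw [gt_iff_lt, div_lt_div_iff₀ (by norm_num) (by exact_mod_cast hnpos)] at hA
    have : 4 * Fintype.card G < A.ncard * 11 := by exact_mod_cast hA
    omega
  have hAne : A.Nonempty := by
    apply Set.nonempty_of_ncard_ne_zero; omega
  have hAA : A + A ≠ Set.univ := by
    intro h
    apply hfull
    apply Set.eq_univ_of_forall
    intro z
    obtain ⟨a, ha⟩ := hAne
    have h1 : z - a ∈ A + A := h ▸ Set.mem_univ _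
    have h2 : (z - a) + a ∈ A + A + A := Set.add_mem_add h1 ha
    simpa using h2
  obtain ⟨H, S, b₀, hb₀A, hS1, hS2, hS3, hS4⟩ := lemF A.ncard A A le_rfl hAne hAne hAA
  set π := QuotientAddGroup.mk' H with hπ
  have hker : ∀ k : G, k ∈ H → π k = 0 := fun k hk => by
    rw [hπ, QuotientAddGroup.coe_mk']
    exact (QuotientAddGroup.eq_zero_iff k).mpr hk
  set Ab : Set (G ⧸ H) := ⇑π '' A with hAb
  set Sb : Set (G ⧸ H) := ⇑π '' S with hSb
  obtain ⟨a₀, ha₀⟩ := hAne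
  have hSne : S.Nonempty := ⟨a₀ + b₀, hS1 a₀ ha₀⟩
  have hhpos : 0 < Nat.card H := Nat.card_pos
  have hn : Nat.card H * H.index = Fintype.card G := by
    rw [AddSubgroup.card_mul_index H, Nat.card_eq_fintype_card]
  have hsat : S = ⇑π ⁻¹' Sb := by
    apply Set.Subset.antisymm (Set.subset_preimage_image _ _)
    rintro x ⟨s, hsS, hsx⟩
    have hmem : x - s ∈ H := by
      rw [hπ, QuotientAddGroup.coe_mk'] at hsx
      exact (QuotientAddGroup.eq_iff_sub_mem).mp hsx.symm
    have := hS3 s hsS (x - s) hmem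
    simpa [show s + (x - s) = x by abel] using this
  have hScard : S.ncard = Nat.card H * Sb.ncard := by
    rw [hsat, hπ, QuotientAddGroup.coe_mk', ncard_preimage_mk]
  have hAcard : A.ncard ≤ Nat.card H * Ab.ncard := by
    have h1 : A ⊆ ⇑π ⁻¹' Ab := Set.subset_preimage_image _ _
    have h2 := Set.ncard_le_ncard h1 (Set.toFinite _)
    rwa [hπ, QuotientAddGroup.coe_mk', ncard_preimage_mk] at h2
  have hSbAb : Sb ⊆ Ab + Ab := by
    rintro _ ⟨s, hsS, rfl⟩
    obtain ⟨u, hu, v, hv, rfl⟩ := hS2 hsS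
    exact ⟨π u, ⟨u, hu, rfl⟩, π v, ⟨v, hv, rfl⟩, (map_add π u v).symm⟩
  have hAbAb : Ab + Ab ≠ Set.univ := by
    intro hcon
    apply hfull
    apply Set.eq_univ_of_forall
    intro z
    have hz : π (z - b₀) ∈ Ab + Ab := hcon ▸ Set.mem_univ _
    obtain ⟨_, ⟨a₁, ha₁, rfl⟩, _, ⟨a₂, ha₂, rfl⟩, hzz⟩ := hz
    have hd : (z - b₀) - (a₁ + a₂) ∈ H := by
      apply (QuotientAddGroup.eq_iff_sub_mem).mp
      have h0 : π (z - b₀) = π (a₁ + a₂) := by rw [map_add]; exact hzz.symm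
      rw [hπ, QuotientAddGroup.coe_mk'] at h0
      exact h0
    have hs' : a₁ + b₀ + ((z - b₀) - (a₁ + a₂)) ∈ S := hS3 _ (hS1 a₁ ha₁) _ hd
    have h1 : a₁ + b₀ + ((z - b₀) - (a₁ + a₂)) ∈ A + A := hS2 hs'
    have h2 := Set.add_mem_add h1 ha₂
    simpa [show (a₁ + b₀ + ((z - b₀) - (a₁ + a₂))) + a₂ = z by abel] using h2
  have hSum : Ab.ncard + Sb.ncard ≤ H.index := by
    have h1 : Sb + Ab ≠ Set.univ := by
      intro hcon
      apply hfull
      apply Set.eq_univ_of_forall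
      intro z
      have hz : π z ∈ Sb + Ab := hcon ▸ Set.mem_univ _
      obtain ⟨_, ⟨s, hs, rfl⟩, _, ⟨a, ha, rfl⟩, hzz⟩ := hz
      have hd : z - (s + a) ∈ H := by
        apply (QuotientAddGroup.eq_iff_sub_mem).mp
        have h0 : π z = π (s + a) := by rw [map_add]; exact hzz.symm
        rw [hπ, QuotientAddGroup.coe_mk'] at h0
        exact h0
      have hs' : s + (z - (s + a)) ∈ S := hS3 s hs _ hd
      have hmem : s + (z - (s + a)) ∈ A + A := hS2 hs'
      have h2 := Set.add_mem_add hmem ha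
      simpa [show (s + (z - (s + a))) + a = z by abel] using h2
    obtain ⟨γ, hγ⟩ := (Set.ne_univ_iff_exists_notMem _).mp h1
    have hdisj : Disjoint Ab ((fun t => γ - t) '' Sb) := by
      rw [Set.disjoint_left]
      rintro q hq ⟨t, ht, rfl⟩
      exact hγ (by simpa [show t + (γ - t) = γ by abel] using Set.add_mem_add ht hq)
    calc Ab.ncard + Sb.ncard
        = Ab.ncard + ((fun t => γ - t) '' Sb).ncard := by
          rw [Set.ncard_image_of_injective _ sub_right_injective]
      _ = (Ab ∪ (fun t => γ - t) '' Sb).ncard :=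
          (Set.ncard_union_eq hdisj (Set.toFinite _) (Set.toFinite _)).symm
      _ ≤ (Set.univ : Set (G ⧸ H)).ncard :=
          Set.ncard_le_ncard (Set.subset_univ _) (Set.toFinite _)
      _ = H.index := by rw [Set.ncard_univ]; rfl
  -- numerics
  have hb1 : 1 ≤ Ab.ncard := (Set.ncard_pos (Set.toFinite _)).mpr ⟨π a₀, a₀, ha₀, rfl⟩
  have hs1 : 1 ≤ Sb.ncard :=
    (Set.ncard_pos (Set.toFinite _)).mpr ⟨π (a₀ + b₀), a₀ + b₀, hS1 a₀ ha₀, rfl⟩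
  have hM : A.ncard + A.ncard ≤ Nat.card H * Sb.ncard + Nat.card H := by
    rw [← hScard]; exact hS4
  have hβm : 4 * H.index < 11 * Ab.ncard := by
    by_contra hc
    push_neg at hc
    have c5 : 11 * A.ncard ≤ 4 * Fintype.card G := by
      calc 11 * A.ncard ≤ 11 * (Nat.card H * Ab.ncard) := by omega
        _ = Nat.card H * (11 * Ab.ncard) := by ring
        _ ≤ Nat.card H * (4 * H.index) := Nat.mul_le_mul_left _ hc
        _ = 4 * (Nat.card H * H.index) := by ring
        _ = 4 * Fintype.card G := by rw [hn]
    omega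
  have hσm : 8 * H.index < 11 * (Sb.ncard + 1) := by
    by_contra hc
    push_neg at hc
    have c5 : 22 * A.ncard ≤ 8 * Fintype.card G := by
      calc 22 * A.ncard ≤ 11 * (Nat.card H * Sb.ncard + Nat.card H) := by omega
        _ = Nat.card H * (11 * (Sb.ncard + 1)) := by ring
        _ ≤ Nat.card H * (8 * H.index) := Nat.mul_le_mul_left _ hc
        _ = 8 * (Nat.card H * H.index) := by ring
        _ = 8 * Fintype.card G := by rw [hn]
    omega
  have hm : H.index = 2 ∨ H.index = 4 ∨ H.index = 5 ∨ H.index = 8 := by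
    have hf9 : H.index ≤ 9 := by omega
    set f := H.index
    interval_cases f <;> omega
  -- a helper: the image of A meets every coset of K̄ pulled back
  rcases hm with hm2 | hm4 | hm5 | hm8
  · -- m = 2 : hC1 forces Ab = univ, so |Ab| = 2, contradiction with |Ab| + |Sb| ≤ 2
    have hAbuniv : Ab = Set.univ := by
      apply Set.eq_univ_of_forall
      intro q
      obtain ⟨g, hg⟩ := QuotientAddGroup.mk'_surjective H q
      obtain ⟨a, haA, hacos⟩ := hC1 H hm2 g
      obtain ⟨k, hkH, hka⟩ := Set.mem_vadd_set.mp hacos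
      refine ⟨a, haA, ?_⟩
      rw [← hka, vadd_eq_add, map_add, hg, hker k hkH, add_zero]
    have hβ2 : Ab.ncard = 2 := by
      rw [hAbuniv, Set.ncard_univ]; exact hm2
    omega
  · -- m = 4
    have hβ2 : Ab.ncard = 2 := by omega
    have hcardQ : Nat.card (G ⧸ H) = 4 := hm4
    have e2 : ∀ q : G ⧸ H, (2 : ℕ) • q = 0 := by
      intro q
      apply quot_two_torsion H h2part
      apply addOrderOf_dvd_iff_nsmul_eq_zero.mp
      have hdvd := addOrderOf_dvd_natCard q
      rwa [hcardQ] at hdvd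
    have hww : ∀ w : G ⧸ H, w + w = 0 := fun w => by rw [← two_nsmul]; exact e2 w
    have key : ∀ w : G ⧸ H, w ≠ 0 →
        (AddSubgroup.comap π (AddSubgroup.zmultiples w)).index = 2 := by
      intro w hw
      have : Fact (Nat.Prime 2) := ⟨Nat.prime_two⟩
      have hord : addOrderOf w = 2 := addOrderOf_eq_prime (e2 w) hw
      have hcard2 : Nat.card (AddSubgroup.zmultiples w) = 2 := by
        rw [Nat.card_zmultiples, hord]
      have hmi := AddSubgroup.card_mul_index (AddSubgroup.zmultiples w)
      rw [hcard2, hcardQ] at hmi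
      have hidx : (AddSubgroup.zmultiples w).index = 2 := by omega
      rw [AddSubgroup.index_comap_of_surjective _ (QuotientAddGroup.mk'_surjective H), hidx]
    obtain ⟨u, v, huv, hAbeq⟩ := Set.ncard_eq_two.mp hβ2
    by_cases h0 : (0 : G ⧸ H) ∈ Ab
    · -- Ab = {0, w} : use hC1 for the subgroup generated by w
      obtain ⟨w, hw0, hAbw⟩ : ∃ w : G ⧸ H, w ≠ 0 ∧ Ab = {0, w} := by
        rw [hAbeq] at h0
        rcases Set.mem_insert_iff.mp h0 with h | h
        · refine ⟨v, fun hh => huv (by rw [← h, hh]), by rw [hAbeq, ← h]⟩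
        · rw [Set.mem_singleton_iff] at h
          refine ⟨u, fun hh => huv (by rw [← h, hh]), by rw [hAbeq, ← h, Set.pair_comm]⟩
      have hpair : ({0, w} : Set (G ⧸ H)) ≠ Set.univ := by
        intro hcon
        have h1 : (Set.univ : Set (G ⧸ H)).ncard = 4 := by rw [Set.ncard_univ, hcardQ]
        have h2 : ({0, w} : Set (G ⧸ H)).ncard ≤ 2 := by
          have i1 := Set.ncard_insert_le (0 : G ⧸ H) ({w} : Set (G ⧸ H))
          have i2 : ({w} : Set (G ⧸ H)).ncard = 1 := Set.ncard_singleton w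
          omega
        rw [hcon] at h2; omega
      obtain ⟨q, hq⟩ := (Set.ne_univ_iff_exists_notMem _).mp hpair
      obtain ⟨g, hg⟩ := QuotientAddGroup.mk'_surjective H q
      obtain ⟨a, haA, hacos⟩ := hC1 _ (key w hw0) g
      obtain ⟨k, hkH, hka⟩ := Set.mem_vadd_set.mp hacos
      have hπk : π k ∈ AddSubgroup.zmultiples w := AddSubgroup.mem_comap.mp hkH
      have hπa : π a = q + π k := by rw [← hka, vadd_eq_add, map_add, hg]
      have hπaAb : π a ∈ Ab := ⟨a, haA, rfl⟩
      rw [hAbw] at hπaAb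
      rcases mem_zmultiples_two (e2 w) hπk with hk0 | hkw <;>
        rcases Set.mem_insert_iff.mp hπaAb with h | h
      · have hq0 : q = 0 := by rw [← h, hπa, hk0, add_zero]
        exact hq (hq0 ▸ Set.mem_insert _ _)
      · rw [Set.mem_singleton_iff] at h
        have hqw : q = w := by rw [← h, hπa, hk0, add_zero]
        exact hq (hqw ▸ Set.mem_insert_iff.mpr (Or.inr rfl))
      · have hqw : q + w = 0 := by
          calc q + w = q + π k := by rw [hkw]
            _ = π a := hπa.symm
            _ = 0 := h
        have h2 : q + w = w + w := by rw [hqw, hww]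
        have : q = w := add_right_cancel h2
        exact hq (this ▸ Set.mem_insert_iff.mpr (Or.inr rfl))
      · rw [Set.mem_singleton_iff] at h
        have hqw : q + w = w := by
          calc q + w = q + π k := by rw [hkw]
            _ = π a := hπa.symm
            _ = w := h
        have h2 : q + w = 0 + w := by rw [zero_add]; exact hqw
        have : q = 0 := add_right_cancel h2
        exact hq (this ▸ Set.mem_insert _ _)
    · -- 0 ∉ Ab : use hC2 for the subgroup generated by u + v
      have hu0 : u ≠ 0 := fun hh => h0 (by rw [hAbeq]; exact Set.mem_insert_iff.mpr (Or.inl hh.symm))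
      have hv0 : v ≠ 0 := fun hh => h0 (by rw [hAbeq]; exact Set.mem_insert_iff.mpr (Or.inr hh.symm))
      have hw0 : u + v ≠ 0 := by
        intro hh
        exact huv (add_left_cancel (hh.trans (hww u).symm)).symm
      have hidx := key (u + v) hw0
      obtain ⟨a, haA, haK⟩ := hC2 (AddSubgroup.comap π (AddSubgroup.zmultiples (u + v)))
        (by omega) (by omega)
      have hπk : π a ∈ AddSubgroup.zmultiples (u + v) := AddSubgroup.mem_comap.mp haK
      have hπaAb : π a ∈ Ab := ⟨a, haA, rfl⟩
      rw [hAbeq] at hπaAb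
      rcases mem_zmultiples_two (e2 _) hπk with h2 | h2 <;>
        rcases Set.mem_insert_iff.mp hπaAb with h | h
      · exact hu0 (by rw [← h, h2])
      · rw [Set.mem_singleton_iff] at h
        exact hv0 (by rw [← h, h2])
      · have h3 : u + 0 = u + v := by rw [add_zero]; exact h.symm.trans h2
        exact hv0 (add_left_cancel h3).symm
      · rw [Set.mem_singleton_iff] at h
        have h3 : 0 + v = u + v := by rw [zero_add]; exact h.symm.trans h2
        exact hu0 (add_right_cancel h3).symm
  · -- m = 5
    have hidx3 : H.index % 3 = 2 := by omega
    have hidx5 : H.index ≤ 5 := by omega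
    have h0 : (0 : G ⧸ H) ∈ Ab := by
      obtain ⟨a, haA, haH⟩ := hC2 H hidx3 hidx5
      exact ⟨a, haA, (QuotientAddGroup.eq_zero_iff a).mpr haH⟩
    have huniv : Set.univ ⊆ Ab + Ab := by
      intro q _
      obtain ⟨g, hg⟩ := QuotientAddGroup.mk'_surjective H q
      obtain ⟨y, hy, hycos⟩ := hC3 H hidx3 (by omega) g
      obtain ⟨k, hkH, hky⟩ := Set.mem_vadd_set.mp hycos
      have hyq : π y = q := by
        rw [← hky, vadd_eq_add, map_add, hg, hker k hkH, add_zero]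
      rcases hy with hyA | hyAA
      · exact ⟨π y, ⟨y, hyA, rfl⟩, 0, h0, by show π y + 0 = q; rw [add_zero, hyq]⟩
      · obtain ⟨u, hu, v, hv, rfl⟩ := hyAA
        exact ⟨π u, ⟨u, hu, rfl⟩, π v, ⟨v, hv, rfl⟩,
          by show π u + π v = q; rw [← map_add]; exact hyq⟩
    exact hAbAb (Set.univ_subset_iff.mp huniv)
  · -- m = 8
    have hβ3 : Ab.ncard = 3 := by omega
    have hσ5 : 5 ≤ Sb.ncard := by omega
    have hcardQ : Nat.card (G ⧸ H) = 8 := hm8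
    have e2 : ∀ q : G ⧸ H, (2 : ℕ) • q = 0 := by
      intro q
      have h8 : (8 : ℕ) • q = 0 := by
        apply addOrderOf_dvd_iff_nsmul_eq_zero.mp
        have hdvd := addOrderOf_dvd_natCard q
        rwa [hcardQ] at hdvd
      have h4 : (4 : ℕ) • ((2 : ℕ) • q) = 0 := by
        rw [smul_smul]
        exact h8
      have h2 := quot_two_torsion H h2part _ h4
      rw [smul_smul] at h2
      exact quot_two_torsion H h2part q h2
    have hxx : ∀ z : G ⧸ H, z + z = 0 := fun z => by rw [← two_nsmul]; exact e2 z
    obtain ⟨p, q, r, hpq, hpr, hqr, hAbeq⟩ := Set.ncard_eq_three.mp hβ3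
    have hcover : Ab + Ab ⊆ {0, p + q, p + r, q + r} := by
      rintro _ ⟨x, hx, y, hy, rfl⟩
      rw [hAbeq] at hx hy
      rcases hx with rfl | rfl | rfl <;> rcases hy with rfl | rfl | rfl <;>
        simp [hxx, add_comm, Set.mem_insert_iff]
    have h4c : ({0, p + q, p + r, q + r} : Set (G ⧸ H)).ncard ≤ 4 := by
      have i1 := Set.ncard_insert_le (0 : G ⧸ H) ({p + q, p + r, q + r} : Set (G ⧸ H))
      have i2 := Set.ncard_insert_le (p + q) ({p + r, q + r} : Set (G ⧸ H))
      have i3 := Set.ncard_insert_le (p + r) ({q + r} : Set (G ⧸ H))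
      have i4 : ({q + r} : Set (G ⧸ H)).ncard = 1 := Set.ncard_singleton _
      omega
    have hle : Sb.ncard ≤ 4 :=
      le_trans (Set.ncard_le_ncard (hSbAb.trans hcover) (Set.toFinite _)) h4c
    omega
end

section
/- Let Y ≥ 1 be an integer and let g be a multiplicative function with |g(p)| ≤ 1 for all primes p and g(p^α) = 0 for α ≥ 2, and let χ₁, …, χ_Y be completely multiplicative functions with |χⱼ(p)| ≤ 1, such that g(p) = (1/Y)Σⱼ χⱼ(p). Then for real s = σ with 1/2 < σ ≤ 1, the Euler product ω(σ) = ∏_p [(1 + g(p)/p^σ)^Y ∏ⱼ (1 − χⱼ(p)/p^σ)] converges and satisfies ζ(2σ)^{−2Y} ≤ |ω(σ)| ≤ ζ(2σ)^{2Y}. -/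
/-!
With `a = g(p)/p^σ` and `b_j = χ_j(p)/p^σ` we have `Y a = ∑_j b_j`, so the Euler factor at `p`
is `exp L_p` with `L_p = Y (log(1 + a) - a) + ∑_j (log(1 - b_j) + b_j)`: the first-order terms
cancel. Comparing Taylor coefficients, `‖log(1 + z) - z‖ ≤ -log(1 - ‖z‖) - ‖z‖ ≤ -log(1 - ‖z‖²)`,
hence `‖L_p‖ ≤ 2Y (-log(1 - p^{-2σ}))`. Summing over `p` and using the Euler product
`∏_p (1 - p^{-2σ})⁻¹ = ζ(2σ)` gives `|log |ω(σ)|| ≤ 2Y log ζ(2σ)`.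
-/

open Complex

-- The Taylor series of `log (1 + z) - z` is dominated termwise by that of `-log (1 - ‖z‖) - ‖z‖`.
lemma Complex.norm_log_one_add_sub_self_le_neg_log_one_sub_sub {z : ℂ} (hz : ‖z‖ < 1) :
    ‖log (1 + z) - z‖ ≤ -Real.log (1 - ‖z‖) - ‖z‖ := by
  have hC := (hasSum_nat_add_iff' 1).mpr (hasSum_taylorSeries_neg_log' (z := -z) (by simpa))
  have hR := (hasSum_nat_add_iff' 1).mpr
    (Real.hasSum_pow_div_log_of_abs_lt_one (x := ‖z‖) (by simpa))
  simp only [Finset.sum_range_one, zero_add, pow_one, Nat.cast_zero, div_one,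
    sub_neg_eq_add] at hC hR
  calc ‖log (1 + z) - z‖ = ‖-log (1 + z) + z‖ := by rw [← norm_neg]; ring_nf
    _ ≤ _ := hC.norm_le_of_bounded hR fun n => by
      rw [norm_div, norm_pow, norm_neg]
      norm_cast

lemma Complex.norm_log_one_add_sub_self_le_of_sq_le {z : ℂ} {t : ℝ} (hzt : ‖z‖ ^ 2 ≤ t)
    (ht : t < 1) : ‖log (1 + z) - z‖ ≤ -Real.log (1 - t) := by
  have hz : ‖z‖ < 1 := by nlinarith [norm_nonneg z]
  have hlog : Real.log (1 + ‖z‖) ≤ ‖z‖ := by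
    linarith [Real.log_le_sub_one_of_pos (by positivity : 0 < 1 + ‖z‖)]
  calc ‖log (1 + z) - z‖ ≤ -Real.log (1 - ‖z‖) - ‖z‖ :=
        norm_log_one_add_sub_self_le_neg_log_one_sub_sub hz
    _ ≤ -Real.log ((1 - ‖z‖) * (1 + ‖z‖)) := by
        rw [Real.log_mul (by linarith) (by positivity)]
        linarith
    _ ≤ -Real.log (1 - t) := by
        gcongr
        linarith

lemma exists_cexp_eq_one_add_pow_mul_prod_one_sub {ι : Type*} [Fintype ι] (n : ℕ) {a : ℂ}
    {b : ι → ℂ} {t : ℝ} (hab : n * a = ∑ i, b i) (ha : ‖a‖ ^ 2 ≤ t) (hb : ∀ i, ‖b i‖ ^ 2 ≤ t)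
    (ht : t < 1) :
    ∃ L, (1 + a) ^ n * ∏ i, (1 - b i) = exp L ∧
      ‖L‖ ≤ (n + Fintype.card ι) * -Real.log (1 - t) := by
  have hne : ∀ {z : ℂ}, ‖z‖ ^ 2 ≤ t → 1 + z ≠ 0 := fun {z} hz h => by
    have : ‖z‖ = 1 := by simp [eq_neg_of_add_eq_zero_right h]
    nlinarith
  have hb' : ∀ i, ‖-b i‖ ^ 2 ≤ t := by simpa using hb
  refine ⟨n * (log (1 + a) - a) + ∑ i, (log (1 + -b i) - -b i), ?_, ?_⟩
  · have hcancel : n * (log (1 + a) - a) + ∑ i, (log (1 + -b i) - -b i) =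
        n * log (1 + a) + ∑ i, log (1 + -b i) := by
      simp only [Finset.sum_sub_distrib, Finset.sum_neg_distrib, ← hab]
      ring
    rw [hcancel, exp_add, exp_nat_mul, exp_log (hne ha), exp_sum]
    simp only [exp_log (hne (hb' _)), sub_eq_add_neg]
  · calc ‖n * (log (1 + a) - a) + ∑ i, (log (1 + -b i) - -b i)‖
        ≤ n * ‖log (1 + a) - a‖ + ∑ i, ‖log (1 + -b i) - -b i‖ := by
          refine (norm_add_le _ _).trans (add_le_add ?_ (norm_sum_le _ _))
          rw [norm_mul, Complex.norm_natCast]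
      _ ≤ n * -Real.log (1 - t) + ∑ _i : ι, -Real.log (1 - t) := by
          gcongr with i
          · exact norm_log_one_add_sub_self_le_of_sq_le ha ht
          · exact norm_log_one_add_sub_self_le_of_sq_le (hb' i) ht
      _ = (n + Fintype.card ι) * -Real.log (1 - t) := by
          rw [Finset.sum_const, Finset.card_univ, nsmul_eq_mul]
          ring

lemma multipliable_and_norm_tprod_mem_Icc {ι : Type*} {f : ι → ℂ} {r : ι → ℝ} {c : ℝ}
    (hr : Summable r) (hf : ∀ i, ∃ L, f i = exp L ∧ ‖L‖ ≤ c * r i) :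
    Multipliable f ∧
      ‖∏' i, f i‖ ∈ Set.Icc (Real.exp (-(c * ∑' i, r i))) (Real.exp (c * ∑' i, r i)) := by
  choose L hfL hL using hf
  have hLs : Summable L := (hr.mul_left c).of_norm_bounded hL
  have hprod : HasProd f (exp (∑' i, L i)) := by
    rw [show f = cexp ∘ L from funext hfL]
    exact hLs.hasSum.cexp
  have hre : |(∑' i, L i).re| ≤ c * ∑' i, r i :=
    calc |(∑' i, L i).re| ≤ ‖∑' i, L i‖ := abs_re_le_norm _
      _ ≤ ∑' i, c * r i := hLs.hasSum.norm_le_of_bounded (hr.mul_left c).hasSum hL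
      _ = c * ∑' i, r i := hr.tsum_mul_left c
  rw [hprod.tprod_eq, norm_exp]
  exact ⟨hprod.multipliable, Real.exp_le_exp.mpr (neg_le_of_abs_le hre),
    Real.exp_le_exp.mpr (le_of_abs_le hre)⟩

noncomputable def Real.zetaSummandHom {s : ℝ} (hs : s ≠ 0) : ℕ →*₀ ℝ where
  toFun n := ((n : ℝ) ^ s)⁻¹
  map_zero' := by simp [hs]
  map_one' := by simp
  map_mul' m n := by simp [Real.mul_rpow m.cast_nonneg n.cast_nonneg, mul_comm]

lemma Real.hasProd_one_sub_prime_rpow_inv_inv {s : ℝ} (hs : 1 < s) :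
    HasProd (fun p : Nat.Primes => (1 - ((p : ℝ) ^ s)⁻¹)⁻¹) (∑' n : ℕ, 1 / (n : ℝ) ^ s) := by
  have hsum : Summable (‖zetaSummandHom (by positivity : s ≠ 0) ·‖) := by
    simpa [zetaSummandHom, abs_of_nonneg, Real.rpow_nonneg] using summable_nat_rpow_inv.mpr hs
  simpa [zetaSummandHom] using EulerProduct.eulerProduct_completely_multiplicative_hasProd hsum

lemma Real.summable_neg_log_one_sub_prime_rpow_inv {s : ℝ} (hs : 1 < s) :
    Summable (fun p : Nat.Primes => -log (1 - ((p : ℝ) ^ s)⁻¹)) := by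
  have h : Summable (fun p : Nat.Primes => ((p : ℝ) ^ s)⁻¹) :=
    (summable_nat_rpow_inv.mpr hs).comp_injective Nat.Primes.coe_nat_injective
  simpa [sub_eq_add_neg] using (summable_log_one_add_of_summable h.neg).neg

lemma Real.exp_tsum_neg_log_one_sub_prime_rpow_inv {s : ℝ} (hs : 1 < s) :
    exp (∑' p : Nat.Primes, -log (1 - ((p : ℝ) ^ s)⁻¹)) = ∑' n : ℕ, 1 / (n : ℝ) ^ s := by
  have hpos : ∀ p : Nat.Primes, 0 < (1 - ((p : ℝ) ^ s)⁻¹)⁻¹ := fun p => by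
    have := inv_lt_one_of_one_lt₀ <|
      one_lt_rpow (by exact_mod_cast p.prop.one_lt : (1 : ℝ) < p) (by linarith : 0 < s)
    simpa using this
  have hsum := summable_neg_log_one_sub_prime_rpow_inv hs
  simp_rw [← log_inv] at hsum ⊢
  rw [rexp_tsum_eq_tprod hpos hsum, (hasProd_one_sub_prime_rpow_inv_inv hs).tprod_eq]

lemma norm_div_natCast_cpow_sq_le {c : ℂ} (hc : ‖c‖ ≤ 1) {n : ℕ} (hn : 0 < n) (σ : ℝ) :
    ‖c / (n : ℂ) ^ (σ : ℂ)‖ ^ 2 ≤ ((n : ℝ) ^ (2 * σ))⁻¹ := by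
  rw [norm_div, norm_natCast_cpow_of_pos hn, ofReal_re, mul_comm, Real.rpow_mul n.cast_nonneg,
    Real.rpow_two, div_pow, div_eq_mul_inv]
  exact mul_le_of_le_one_left (by positivity) (pow_le_one₀ (norm_nonneg c) hc)

theorem stmt19_general (Y : ℕ)
    (g : ArithmeticFunction ℂ)
    (hg1 : ∀ p : ℕ, p.Prime → ‖(g p)‖ ≤ 1)
    (χ : Fin Y → ℕ → ℂ)
    (hχb : ∀ j, ∀ p : ℕ, p.Prime → ‖(χ j p)‖ ≤ 1)
    (havg : ∀ p : ℕ, p.Prime → g p = (1 / (Y : ℂ)) * ∑ j, χ j p)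
    (σ : ℝ) (hσ : 1/2 < σ) :
    Multipliable (fun p : Nat.Primes =>
      (1 + g p / (p : ℂ) ^ (σ : ℂ)) ^ Y *
        ∏ j, (1 - χ j p / (p : ℂ) ^ (σ : ℂ))) ∧
    ((∑' n : ℕ, 1 / (n : ℝ) ^ (2 * σ)) ^ (2 * Y))⁻¹ ≤
        ‖(∏' p : Nat.Primes,
          (1 + g p / (p : ℂ) ^ (σ : ℂ)) ^ Y *
            ∏ j, (1 - χ j p / (p : ℂ) ^ (σ : ℂ)))‖ ∧
      ‖(∏' p : Nat.Primes,
          (1 + g p / (p : ℂ) ^ (σ : ℂ)) ^ Y *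
            ∏ j, (1 - χ j p / (p : ℂ) ^ (σ : ℂ)))‖ ≤
        (∑' n : ℕ, 1 / (n : ℝ) ^ (2 * σ)) ^ (2 * Y) := by
  have hs : 1 < 2 * σ := by linarith
  have hmean (p : Nat.Primes) :
      (Y : ℂ) * (g p / (p : ℂ) ^ (σ : ℂ)) = ∑ j, χ j p / (p : ℂ) ^ (σ : ℂ) := by
    rcases Y.eq_zero_or_pos with rfl | hY
    · simp -- the sum over `Fin 0` is empty
    · rw [havg p p.prop, ← mul_div_assoc, ← mul_assoc,
        mul_one_div_cancel (Nat.cast_ne_zero.mpr hY.ne'), one_mul, Finset.sum_div]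
  have hfactor (p : Nat.Primes) := exists_cexp_eq_one_add_pow_mul_prod_one_sub Y (hmean p)
    (norm_div_natCast_cpow_sq_le (hg1 p p.prop) p.prop.pos σ)
    (fun j => norm_div_natCast_cpow_sq_le (hχb j p p.prop) p.prop.pos σ)
    (inv_lt_one_of_one_lt₀ <| Real.one_lt_rpow (by exact_mod_cast p.prop.one_lt) (by linarith))
  obtain ⟨hmult, hlow, hup⟩ :=
    multipliable_and_norm_tprod_mem_Icc (Real.summable_neg_log_one_sub_prime_rpow_inv hs) hfactor
  rw [Real.exp_neg] at hlow
  rw [Fintype.card_fin, ← Nat.cast_add, ← two_mul, Real.exp_nat_mul,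
    Real.exp_tsum_neg_log_one_sub_prime_rpow_inv hs] at hlow hup
  exact ⟨hmult, hlow, hup⟩

/-- bounds `ζ(2σ)^{-2Y} ≤ |ω(σ)| ≤ ζ(2σ)^{2Y}` for the Euler
product `ω(σ) = ∏_p (1 + g(p)/p^σ)^Y ∏_j (1 − χ_j(p)/p^σ)`, where `g` is
multiplicative with `|g(p)| ≤ 1`, vanishing on higher prime powers, the `χ_j`
are completely multiplicative with `|χ_j(p)| ≤ 1`, and
`g(p) = (1/Y) ∑_j χ_j(p)`.  Here `ζ(2σ) = ∑_n n^{-2σ}`. -/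
theorem stmt19 (Y : ℕ) (hY : 1 ≤ Y)
    (g : ArithmeticFunction ℂ) (hg : g.IsMultiplicative)
    (hg1 : ∀ p : ℕ, p.Prime → ‖(g p)‖ ≤ 1)
    (hgpow : ∀ (p α : ℕ), p.Prime → 2 ≤ α → g (p ^ α) = 0)
    (χ : Fin Y → ℕ → ℂ)
    (hχ1 : ∀ j, χ j 1 = 1)
    (hχm : ∀ j, ∀ m n : ℕ, χ j (m * n) = χ j m * χ j n)
    (hχb : ∀ j, ∀ p : ℕ, p.Prime → ‖(χ j p)‖ ≤ 1)
    (havg : ∀ p : ℕ, p.Prime → g p = (1 / (Y : ℂ)) * ∑ j, χ j p)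
    (σ : ℝ) (hσ : 1/2 < σ) (hσ1 : σ ≤ 1) :
    Multipliable (fun p : Nat.Primes =>
      (1 + g p / (p : ℂ) ^ (σ : ℂ)) ^ Y *
        ∏ j, (1 - χ j p / (p : ℂ) ^ (σ : ℂ))) ∧
    ((∑' n : ℕ, 1 / (n : ℝ) ^ (2 * σ)) ^ (2 * Y))⁻¹ ≤
        ‖(∏' p : Nat.Primes,
          (1 + g p / (p : ℂ) ^ (σ : ℂ)) ^ Y *
            ∏ j, (1 - χ j p / (p : ℂ) ^ (σ : ℂ)))‖ ∧
      ‖(∏' p : Nat.Primes,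
          (1 + g p / (p : ℂ) ^ (σ : ℂ)) ^ Y *
            ∏ j, (1 - χ j p / (p : ℂ) ^ (σ : ℂ)))‖ ≤
        (∑' n : ℕ, 1 / (n : ℝ) ^ (2 * σ)) ^ (2 * Y) :=
  stmt19_general Y g hg1 χ hχb havg σ hσ
end
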